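/- arXiv:1611.05005 — 4 statements merged into one kernel-verified Lean document; each statement's English description precedes it below -/
import Mathlib

section
/- Let Φ : X → Y be a (K,L)-quasi-isometry between geodesic metric spaces and let α be a rectifiable path in X joining points x₁ and x₂. Then there is a path β in Y joining Φ(x₁) and Φ(x₂) such that the Hausdorff distance between Φ(α) and β is at most C and the length of β satisfies |β| ≤ C·|α| + C, where C depends only on K and L. -/
open Set Metric

noncomputable section

/-- `Φ` is a `(K,L)`-quasi-isometric embedding. -/
def IsQIEmbedding {X Y : Type*} [MetricSpace X] [MetricSpace Y]
    (K L : ℝ) (Φ : X → Y) : Prop :=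
  ∀ x₁ x₂ : X, (1 / K) * dist x₁ x₂ - L ≤ dist (Φ x₁) (Φ x₂) ∧
    dist (Φ x₁) (Φ x₂) ≤ K * dist x₁ x₂ + L

/-- `Φ` is a `(K,L)`-quasi-isometry: a `(K,L)`-quasi-isometric embedding whose image is
`L`-dense. -/
def IsQuasiIsometry {X Y : Type*} [MetricSpace X] [MetricSpace Y]
    (K L : ℝ) (Φ : X → Y) : Prop :=
  IsQIEmbedding K L Φ ∧ ∀ y : Y, ∃ x : X, dist y (Φ x) ≤ L

/-- A geodesic metric space: any two points are joined by a geodesic segment. -/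
def GeodesicSpace (X : Type*) [MetricSpace X] : Prop :=
  ∀ x y : X, ∃ γ : ℝ → X, γ 0 = x ∧ γ (dist x y) = y ∧
    ∀ s ∈ Set.Icc (0 : ℝ) (dist x y), ∀ t ∈ Set.Icc (0 : ℝ) (dist x y),
      dist (γ s) (γ t) = |s - t|

/-- `σ` is a `(K,L)`-quasi-geodesic segment parameterized on `[a,b]`. -/
def IsQGSegOn {X : Type*} [MetricSpace X] (K L a b : ℝ) (σ : ℝ → X) : Prop :=
  ∀ s ∈ Set.Icc a b, ∀ t ∈ Set.Icc a b,
    (1 / K) * |s - t| - L ≤ dist (σ s) (σ t) ∧ dist (σ s) (σ t) ≤ K * |s - t| + L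

/-- `γ : ℝ → X` is a bi-infinite `(K,L)`-quasi-geodesic. -/
def IsQuasiGeodesicLine {X : Type*} [MetricSpace X] (K L : ℝ) (γ : ℝ → X) : Prop :=
  ∀ s t : ℝ, (1 / K) * |s - t| - L ≤ dist (γ s) (γ t) ∧ dist (γ s) (γ t) ≤ K * |s - t| + L

/-- `γ : ℝ → X` is a bi-infinite geodesic. -/
def IsGeodesicLine {X : Type*} [MetricSpace X] (γ : ℝ → X) : Prop :=
  ∀ s t : ℝ, dist (γ s) (γ t) = |s - t|

/-- `γ` is `M`-Morse: every `(K,L)`-quasi-geodesic segment with endpoints on `γ` stays in the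
`M K L`-neighborhood of `γ`. -/
def MorseWith {X : Type*} [MetricSpace X] (M : ℝ → ℝ → ℝ) (γ : ℝ → X) : Prop :=
  ∀ K L : ℝ, 1 ≤ K → 0 < L → ∀ a b : ℝ, a ≤ b → ∀ σ : ℝ → X,
    IsQGSegOn K L a b σ → (∃ t, σ a = γ t) → (∃ t, σ b = γ t) →
      ∀ s ∈ Set.Icc a b, ∃ t, dist (σ s) (γ t) ≤ M K L

section Aux

/-- Locate a point between consecutive terms of a monotone sequence. -/
lemma exists_piece {q : ℕ → ℝ} (hq : Monotone q) {t : ℝ} :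
    ∀ n : ℕ, q 0 ≤ t → t ≤ q (n + 1) → ∃ k ≤ n, q k ≤ t ∧ t ≤ q (k + 1) := by
  intro n
  induction n with
  | zero => intro h0 h1; exact ⟨0, le_rfl, h0, h1⟩
  | succ n ih =>
    intro h0 h1
    by_cases h : t ≤ q (n + 1)
    · obtain ⟨k, hk, h2⟩ := ih h0 h
      exact ⟨k, hk.trans (Nat.le_succ n), h2⟩
    · exact ⟨n + 1, le_rfl, (not_le.1 h).le, h1⟩

/-- A constant-speed geodesic path on `[0,1]` between two points. -/
lemma geodesic_path {Y : Type} [MetricSpace Y] (hY : GeodesicSpace Y) (a b : Y) :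
    ∃ β : ℝ → Y, Continuous β ∧ β 0 = a ∧ β 1 = b ∧
      (∀ s ∈ Icc (0:ℝ) 1, dist (β s) a ≤ dist a b) ∧
      eVariationOn β (Icc 0 1) ≤ ENNReal.ofReal (dist a b) := by
  obtain ⟨γ, hγ0, hγd, hiso⟩ := hY a b
  set d := dist a b with hd
  have hd0 : 0 ≤ d := dist_nonneg
  set c : ℝ → ℝ := fun s => d * max 0 (min s 1) with hc
  have hcmem : ∀ s, c s ∈ Icc (0:ℝ) d := by
    intro s
    constructor
    · exact mul_nonneg hd0 (le_max_left _ _)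
    · have h1 : max 0 (min s 1) ≤ 1 := max_le zero_le_one (min_le_right s 1)
      calc d * max 0 (min s 1) ≤ d * 1 := mul_le_mul_of_nonneg_left h1 hd0
        _ = d := mul_one d
  have hceq : ∀ s ∈ Icc (0:ℝ) 1, c s = d * s := by
    intro s hs; rw [hc]; simp only [min_eq_left hs.2, max_eq_right hs.1]
  have hγcont : ContinuousOn γ (Icc 0 d) := by
    have : LipschitzOnWith 1 γ (Icc 0 d) := by
      rw [lipschitzOnWith_iff_dist_le_mul]
      intro x hx y hy
      rw [hiso x hx y hy, Real.dist_eq]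
      simp
    exact this.continuousOn
  have hccont : Continuous c := by fun_prop
  refine ⟨fun s => γ (c s), hγcont.comp_continuous hccont hcmem, ?_, ?_, ?_, ?_⟩
  · show γ (c 0) = a
    have : c 0 = 0 := by simp [hc]
    rw [this, hγ0]
  · show γ (c 1) = b
    have : c 1 = d := by simp [hc]
    rw [this, hγd]
  · intro s hs
    rw [← hγ0, hiso (c s) (hcmem s) 0 ⟨le_rfl, hd0⟩, sub_zero,
      abs_of_nonneg (hcmem s).1]
    exact (hcmem s).2
  · have hlip : LipschitzOnWith d.toNNReal (fun s => γ (c s)) (Icc 0 1) := by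
      rw [lipschitzOnWith_iff_dist_le_mul]
      intro x hx y hy
      rw [hiso (c x) (hcmem x) (c y) (hcmem y), hceq x hx, hceq y hy,
        Real.coe_toNNReal _ hd0, Real.dist_eq, ← mul_sub, abs_mul, abs_of_nonneg hd0]
    calc eVariationOn (fun s => γ (c s)) (Icc 0 1)
        = eVariationOn ((fun s => γ (c s)) ∘ id) (Icc 0 1) := rfl
      _ ≤ d.toNNReal * eVariationOn id (Icc 0 1) :=
          hlip.comp_eVariationOn_le (mapsTo_id _)
      _ ≤ d.toNNReal * ENNReal.ofReal (1 - 0) := by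
          apply mul_le_mul_right
          have := (monotoneOn_id (s := Icc (0:ℝ) 1)).eVariationOn_le
            (a := 0) (b := 1) (by simp) (by simp)
          rwa [inter_self] at this
      _ = ENNReal.ofReal d := by
          rw [sub_zero, ENNReal.ofReal_one, mul_one]
          simp [ENNReal.ofReal]

/-- Concatenation of `n+1` geodesic segments through prescribed points. -/
lemma concat_path {Y : Type} [MetricSpace Y] (hY : GeodesicSpace Y) :
    ∀ n : ℕ, ∀ y : ℕ → Y,
      ∃ β : ℝ → Y, Continuous β ∧ β 0 = y 0 ∧ β 1 = y (n + 1) ∧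
        (∀ s ∈ Icc (0:ℝ) 1, ∃ k < n + 1, dist (β s) (y k) ≤ dist (y k) (y (k + 1))) ∧
        (∀ k ≤ n + 1, ∃ s ∈ Icc (0:ℝ) 1, β s = y k) ∧
        eVariationOn β (Icc 0 1) ≤
          ∑ k ∈ Finset.range (n + 1), ENNReal.ofReal (dist (y k) (y (k + 1))) := by
  intro n
  induction n with
  | zero =>
    intro y
    obtain ⟨β, hc, h0, h1, hH, hvar⟩ := geodesic_path hY (y 0) (y 1)
    refine ⟨β, hc, h0, h1, ?_, ?_, by simpa using hvar⟩
    · intro s hs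
      exact ⟨0, by norm_num, hH s hs⟩
    · intro k hk
      interval_cases k
      · exact ⟨0, by norm_num, h0⟩
      · exact ⟨1, by norm_num, h1⟩
  | succ n ih =>
    intro y
    obtain ⟨β₁, c1, h10, h11, h1H, h1var⟩ := geodesic_path hY (y 0) (y 1)
    obtain ⟨β₂, c2, h20, h21, h2H, h2onto, h2var⟩ := ih (fun k => y (k + 1))
    classical
    set β : ℝ → Y := fun s => if s ≤ 1/2 then β₁ (2*s) else β₂ (2*s - 1) with hβ
    have hmid : β₁ 1 = β₂ 0 := by rw [h11, h20]
    have hcβ : Continuous β := by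
      apply Continuous.if_le (by fun_prop) (by fun_prop) continuous_id continuous_const
      intro x hx
      simp only [id_eq] at hx
      subst hx
      norm_num [hmid]
    have hβ0 : β 0 = y 0 := by
      rw [hβ]; norm_num [h10]
    have hβ1 : β 1 = y (n + 2) := by
      rw [hβ]; norm_num [h21]
    refine ⟨β, hcβ, hβ0, hβ1, ?_, ?_, ?_⟩
    · -- every point of β is near one of the y k
      intro s hs
      by_cases h : s ≤ 1/2
      · have : β s = β₁ (2*s) := if_pos h
        rw [this]
        exact ⟨0, by omega, h1H (2*s) ⟨by linarith [hs.1], by linarith⟩⟩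
      · have : β s = β₂ (2*s - 1) := if_neg h
        rw [this]
        obtain ⟨k, hk, hd⟩ := h2H (2*s - 1) ⟨by linarith [not_le.1 h], by linarith [hs.2]⟩
        exact ⟨k + 1, by omega, hd⟩
    · -- β passes through all the y k
      intro k hk
      match k with
      | 0 => exact ⟨0, by norm_num, hβ0⟩
      | (j + 1) =>
        obtain ⟨s', hs', hs'eq⟩ := h2onto j (by omega)
        by_cases h : s' = 0
        · refine ⟨1/2, by norm_num, ?_⟩
          have : β (1/2 : ℝ) = β₁ 1 := by rw [hβ]; norm_num
          rw [this, h11, ← h20, ← h, hs'eq]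
        · have hs'0 : 0 < s' := lt_of_le_of_ne hs'.1 (Ne.symm h)
          refine ⟨(s' + 1)/2, ⟨by linarith, by linarith [hs'.2]⟩, ?_⟩
          have : β ((s' + 1)/2) = β₂ (2*((s' + 1)/2) - 1) := if_neg (by linarith)
          rw [this, show 2*((s' + 1)/2) - 1 = s' by ring, hs'eq]
    · -- variation bound
      have hsplit : eVariationOn β (Icc 0 (1/2)) + eVariationOn β (Icc (1/2) 1)
          = eVariationOn β (Icc 0 1) := by
        have := eVariationOn.Icc_add_Icc β (s := univ) (a := 0) (b := 1/2) (c := 1)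
          (by norm_num) (by norm_num) (mem_univ _)
        simpa using this
      have hv1 : eVariationOn β (Icc 0 (1/2)) ≤ ENNReal.ofReal (dist (y 0) (y 1)) := by
        have heq : EqOn β (β₁ ∘ fun s => 2*s) (Icc 0 (1/2)) := by
          intro s hs
          exact if_pos hs.2
        rw [eVariationOn.eq_of_eqOn heq]
        refine le_trans (eVariationOn.comp_le_of_monotoneOn β₁ (fun s => 2*s)
          (fun a _ b _ hab => mul_le_mul_of_nonneg_left hab (by norm_num)) ?_) h1var
        intro s hs
        exact ⟨by simp only []; linarith [hs.1], by simp only []; linarith [hs.2]⟩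
      have hv2 : eVariationOn β (Icc (1/2) 1) ≤
          ∑ k ∈ Finset.range (n + 1), ENNReal.ofReal (dist (y (k + 1)) (y (k + 2))) := by
        have heq : EqOn β (β₂ ∘ fun s => 2*s - 1) (Icc (1/2) 1) := by
          intro s hs
          by_cases h : s ≤ 1/2
          · have hs2 : s = 1/2 := le_antisymm h hs.1
            subst hs2
            have : β (1/2 : ℝ) = β₁ 1 := by rw [hβ]; norm_num
            rw [this, hmid]
            simp only [Function.comp_apply]
            norm_num
          · exact if_neg h
        rw [eVariationOn.eq_of_eqOn heq]
        refine le_trans (eVariationOn.comp_le_of_monotoneOn β₂ (fun s => 2*s - 1)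
          (fun a _ b _ hab => sub_le_sub_right (mul_le_mul_of_nonneg_left hab (by norm_num)) 1)
          ?_) h2var
        intro s hs
        exact ⟨by simp only []; linarith [hs.1], by simp only []; linarith [hs.2]⟩
      calc eVariationOn β (Icc 0 1)
          = eVariationOn β (Icc 0 (1/2)) + eVariationOn β (Icc (1/2) 1) := hsplit.symm
        _ ≤ ENNReal.ofReal (dist (y 0) (y 1)) +
            ∑ k ∈ Finset.range (n + 1), ENNReal.ofReal (dist (y (k + 1)) (y (k + 2))) :=
            add_le_add hv1 hv2
        _ = ∑ k ∈ Finset.range (n + 2), ENNReal.ofReal (dist (y k) (y (k + 1))) := by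
            rw [Finset.sum_range_succ' (fun k => ENNReal.ofReal (dist (y k) (y (k + 1)))) (n + 1)]
            ring

open Classical in
/-- Greedy selection of indices: `greedy m D (k+1)` is the least index `j ≤ m` beyond
`greedy m D k` where `D` fires, and `m` if there is none. -/
noncomputable def greedy (m : ℕ) (D : ℕ → ℕ → Prop) : ℕ → ℕ
  | 0 => 0
  | k + 1 =>
    if h : ∃ j, greedy m D k < j ∧ j ≤ m ∧ D (greedy m D k) j then Nat.find h else m

open Classical in
lemma greedy_le (m : ℕ) (D : ℕ → ℕ → Prop) : ∀ k, greedy m D k ≤ m := by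
  intro k
  cases k with
  | zero => exact Nat.zero_le m
  | succ k =>
    simp only [greedy]
    split
    · next h => exact (Nat.find_spec h).2.1
    · exact le_rfl

open Classical in
lemma greedy_mono (m : ℕ) (D : ℕ → ℕ → Prop) : Monotone (greedy m D) := by
  apply monotone_nat_of_le_succ
  intro k
  simp only [greedy]
  split
  · next h => exact (Nat.find_spec h).1.le
  · exact greedy_le m D k

open Classical in
lemma greedy_lt_succ (m : ℕ) (D : ℕ → ℕ → Prop) {k : ℕ} (h : greedy m D k < m) :
    greedy m D k < greedy m D (k + 1) := by
  simp only [greedy]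
  split
  · next hex => exact (Nat.find_spec hex).1
  · exact h

open Classical in
lemma greedy_stop (m : ℕ) (D : ℕ → ℕ → Prop) {k : ℕ} (h : greedy m D k = m) :
    greedy m D (k + 1) = m := by
  simp only [greedy]
  rw [dif_neg]
  rintro ⟨j, h1, h2, -⟩
  omega

open Classical in
lemma greedy_not_between (m : ℕ) (D : ℕ → ℕ → Prop) {k j : ℕ}
    (h1 : greedy m D k < j) (h2 : j < greedy m D (k + 1)) : ¬ D (greedy m D k) j := by
  simp only [greedy] at h2
  revert h2
  split
  · next hex =>
    intro h2 hD
    have hjm : j ≤ m := le_trans h2.le (Nat.find_spec hex).2.1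
    exact Nat.find_min hex h2 ⟨h1, hjm, hD⟩
  · next hex =>
    intro h2 hD
    exact hex ⟨j, h1, h2.le, hD⟩

open Classical in
lemma greedy_spec (m : ℕ) (D : ℕ → ℕ → Prop) {k : ℕ} (h : greedy m D (k + 1) < m) :
    D (greedy m D k) (greedy m D (k + 1)) := by
  simp only [greedy] at h ⊢
  revert h
  split
  · next hex => intro _; exact (Nat.find_spec hex).2.2
  · intro h; omega

open Classical in
lemma greedy_reaches (m : ℕ) (D : ℕ → ℕ → Prop) : greedy m D m = m := by
  have key : ∀ k, greedy m D k = m ∨ k ≤ greedy m D k := by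
    intro k
    induction k with
    | zero => right; exact Nat.zero_le 0
    | succ k ih =>
      rcases ih with h | h
      · left; exact greedy_stop m D h
      · by_cases hm : greedy m D k = m
        · left; exact greedy_stop m D hm
        · right
          have : greedy m D k < m := lt_of_le_of_ne (greedy_le m D k) hm
          have := greedy_lt_succ m D this
          omega
  rcases key m with h | h
  · exact h
  · exact le_antisymm (greedy_le m D m) h

end Aux

/-- Pushing forward a rectifiable path through a `(K,L)`-quasi-isometry: there is a constant
`C = C(K,L)` such that for any rectifiable path `α` from `x₁` to `x₂` in `X` there is a path
`β` in `Y` from `Φ x₁` to `Φ x₂` with Hausdorff distance at most `C` from `Φ ∘ α` and with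
length `|β| ≤ C·|α| + C`. -/
theorem quasiIsometry_path_pushforward (K L : ℝ) (hK : 1 ≤ K) (hL : 0 < L) :
    ∃ C : ℝ, 0 < C ∧ ∀ (X : Type) (Y : Type) (_ : MetricSpace X) (_ : MetricSpace Y),
      GeodesicSpace X → GeodesicSpace Y → ∀ Φ : X → Y, IsQuasiIsometry K L Φ →
      ∀ (x₁ x₂ : X) (α : ℝ → X), ContinuousOn α (Set.Icc 0 1) →
        α 0 = x₁ → α 1 = x₂ → eVariationOn α (Set.Icc 0 1) ≠ ⊤ →
        ∃ β : ℝ → Y, ContinuousOn β (Set.Icc 0 1) ∧ β 0 = Φ x₁ ∧ β 1 = Φ x₂ ∧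
          EMetric.hausdorffEdist ((Φ ∘ α) '' Set.Icc 0 1) (β '' Set.Icc 0 1) ≤
            ENNReal.ofReal C ∧
          eVariationOn β (Set.Icc 0 1) ≤
            ENNReal.ofReal C * eVariationOn α (Set.Icc 0 1) + ENNReal.ofReal C := by
  classical
  refine ⟨3*K + 3*L + 3, by linarith, ?_⟩
  intro X Y _ _ hX hY Φ hΦ x₁ x₂ α hα hα0 hα1 hfin
  set C := 3*K + 3*L + 3 with hCdef
  obtain ⟨hup, -⟩ := hΦ
  have hΦle : ∀ a b : X, dist (Φ a) (Φ b) ≤ K * dist a b + L := fun a b => (hup a b).2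
  -- uniform continuity of α
  have hu : UniformContinuousOn α (Icc 0 1) :=
    isCompact_Icc.uniformContinuousOn_of_continuous hα
  rw [Metric.uniformContinuousOn_iff] at hu
  obtain ⟨δ, hδ0, hδ⟩ := hu 1 one_pos
  obtain ⟨m', hm'⟩ := exists_nat_one_div_lt hδ0
  set m := m' + 1 with hmdef
  have hm0 : 0 < m := Nat.succ_pos m'
  have hmδ : 1 / (m : ℝ) < δ := by rw [hmdef]; push_cast; exact hm'
  have hmR : (0:ℝ) < m := by exact_mod_cast hm0
  -- the fine partition
  set p : ℕ → ℝ := fun j => min ((j : ℝ) / m) 1 with hpdef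
  have hpmono : Monotone p := by
    intro i j hij
    exact min_le_min (by gcongr <;> exact_mod_cast hij) le_rfl
  have hpmem : ∀ j, p j ∈ Icc (0:ℝ) 1 :=
    fun j => ⟨le_min (by positivity) zero_le_one, min_le_right _ _⟩
  have hpeq : ∀ j ≤ m, p j = (j : ℝ) / m := by
    intro j hj
    apply min_eq_left
    rw [div_le_one hmR]
    exact_mod_cast hj
  have hp0 : p 0 = 0 := by simp [hpdef]
  have hpm : p m = 1 := by rw [hpeq m le_rfl, div_self hmR.ne']
  -- mesh estimate
  have hmesh : ∀ j < m, ∀ t ∈ Icc (p j) (p (j+1)), dist (α t) (α (p j)) < 1 := by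
    intro j hj t ht
    have htmem : t ∈ Icc (0:ℝ) 1 := ⟨(hpmem j).1.trans ht.1, ht.2.trans (hpmem (j+1)).2⟩
    apply hδ t htmem (p j) (hpmem j)
    rw [Real.dist_eq, abs_of_nonneg (by linarith [ht.1])]
    have hgap : p (j+1) - p j ≤ 1 / m := by
      rw [hpeq j hj.le, hpeq (j+1) hj, div_sub_div_same]
      have hcast : ((j+1 : ℕ):ℝ) - ((j : ℕ):ℝ) = 1 := by push_cast; ring
      rw [hcast]
    linarith [ht.2, ht.1]
  -- greedy selection of marked indices
  set D : ℕ → ℕ → Prop := fun i j => 1 < dist (α (p i)) (α (p j)) with hDdef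
  set g : ℕ → ℕ := greedy m D with hgdef
  have hreach : ∃ k, g k = m := ⟨m, greedy_reaches m D⟩
  set n := Nat.find hreach with hndef
  have hgn : g n = m := Nat.find_spec hreach
  have hglt : ∀ k < n, g k < m := fun k hk =>
    lt_of_le_of_ne (greedy_le m D k) (Nat.find_min hreach hk)
  have hg0 : g 0 = 0 := rfl
  have hn0 : 0 < n := by
    rcases Nat.eq_zero_or_pos n with h | h
    · exfalso; rw [h] at hgn; omega
    · exact h
  set u : ℕ → ℝ := fun k => p (g k) with hudef
  have humono : Monotone u := fun i j hij => hpmono (greedy_mono m D hij)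
  have humem : ∀ k, u k ∈ Icc (0:ℝ) 1 := fun k => hpmem (g k)
  have hu0 : u 0 = 0 := by show p (g 0) = 0; rw [hg0, hp0]
  have hun : u n = 1 := by show p (g n) = 1; rw [hgn, hpm]
  -- distance estimates
  have hstep : ∀ k < n, ∀ j, g k ≤ j → j < g (k+1) → dist (α (p j)) (α (u k)) ≤ 1 := by
    intro k hk j hj1 hj2
    rcases eq_or_lt_of_le hj1 with heq | hlt
    · rw [← heq]
      show dist (α (p (g k))) (α (p (g k))) ≤ 1
      simp
    · have hnb := greedy_not_between m D hlt hj2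
      simp only [hDdef, not_lt] at hnb
      show dist (α (p j)) (α (p (g k))) ≤ 1
      rw [dist_comm]
      exact hnb
  have hseg : ∀ k < n, dist (α (u k)) (α (u (k+1))) ≤ 2 := by
    intro k hk
    have hgklt : g k < m := hglt k hk
    have hsucc : g k < g (k+1) := greedy_lt_succ m D hgklt
    set j := g (k+1) - 1 with hjdef
    have hj1 : g k ≤ j := by omega
    have hj2 : j < g (k+1) := by omega
    have hjm : j < m := by have hle : g (k+1) ≤ m := greedy_le m D (k+1); omega
    have h1 : dist (α (p j)) (α (u k)) ≤ 1 := hstep k hk j hj1 hj2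
    have h2 : dist (α (p (j+1))) (α (p j)) < 1 :=
      hmesh j hjm (p (j+1)) ⟨hpmono (Nat.le_succ j), le_rfl⟩
    have hjj : u (k+1) = p (j+1) := by
      show p (g (k+1)) = p (j+1); congr 1; omega
    rw [hjj, dist_comm]
    calc dist (α (p (j+1))) (α (u k))
        ≤ dist (α (p (j+1))) (α (p j)) + dist (α (p j)) (α (u k)) := dist_triangle _ _ _
      _ ≤ 2 := by linarith
  -- every point of α is near a marked point
  have hnear : ∀ t ∈ Icc (0:ℝ) 1, ∃ k < n, dist (α t) (α (u k)) ≤ 2 := by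
    intro t ht
    obtain ⟨n', hn'⟩ : ∃ n', n = n' + 1 := ⟨n - 1, by omega⟩
    have h0 : u 0 ≤ t := by rw [hu0]; exact ht.1
    have h1 : t ≤ u (n' + 1) := by rw [← hn', hun]; exact ht.2
    obtain ⟨k, hk, hkt1, hkt2⟩ := exists_piece humono n' h0 h1
    have hkn : k < n := by omega
    have hgklt : g k < m := hglt k hkn
    have hsucc : g k < g (k+1) := greedy_lt_succ m D hgklt
    set r := g (k+1) - g k - 1 with hrdef
    set q : ℕ → ℝ := fun i => p (g k + min i (r + 1)) with hqdef
    have hqmono : Monotone q := by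
      intro i i' hii'
      apply hpmono
      have : min i (r+1) ≤ min i' (r+1) := by omega
      omega
    have hq0 : q 0 ≤ t := by
      show p (g k + min 0 (r+1)) ≤ t
      rw [Nat.zero_min, Nat.add_zero]
      exact hkt1
    have hq1 : t ≤ q (r + 1) := by
      show t ≤ p (g k + min (r+1) (r+1))
      rw [min_self]
      have heq : g k + (r + 1) = g (k+1) := by omega
      rw [heq]
      exact hkt2
    obtain ⟨i, hi, hit1, hit2⟩ := exists_piece hqmono r hq0 hq1
    set j := g k + i with hjdef
    have hqi : q i = p j := by
      show p (g k + min i (r+1)) = p j; congr 1; omega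
    have hqi1 : q (i+1) = p (j+1) := by
      show p (g k + min (i+1) (r+1)) = p (j+1); congr 1; omega
    have hjlt : j < g (k+1) := by omega
    have hjm : j < m := by have hle : g (k+1) ≤ m := greedy_le m D (k+1); omega
    have hd1 : dist (α t) (α (p j)) < 1 := by
      apply hmesh j hjm
      rw [hqi] at hit1; rw [hqi1] at hit2
      exact ⟨hit1, hit2⟩
    have hd2 : dist (α (p j)) (α (u k)) ≤ 1 := hstep k hkn j (by omega) hjlt
    refine ⟨k, hkn, ?_⟩
    calc dist (α t) (α (u k))
        ≤ dist (α t) (α (p j)) + dist (α (p j)) (α (u k)) := dist_triangle _ _ _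
      _ ≤ 2 := by linarith
  -- sum of distances is bounded by the variation
  have hsumEN : ∀ N : ℕ,
      ∑ k ∈ Finset.range N, ENNReal.ofReal (dist (α (u k)) (α (u (k+1)))) ≤
        eVariationOn α (Icc 0 1) := by
    intro N
    refine le_trans (le_of_eq ?_) (eVariationOn.sum_le (f := α) (n := N) humono humem)
    refine Finset.sum_congr rfl fun k _ => ?_
    rw [edist_dist, dist_comm]
  set v := (eVariationOn α (Icc 0 1)).toReal with hvdef
  have hv0 : 0 ≤ v := ENNReal.toReal_nonneg
  have hofv : ENNReal.ofReal v = eVariationOn α (Icc 0 1) := ENNReal.ofReal_toReal hfin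
  have hsumreal : ∑ k ∈ Finset.range n, dist (α (u k)) (α (u (k+1))) ≤ v := by
    have h1 : ENNReal.ofReal (∑ k ∈ Finset.range n, dist (α (u k)) (α (u (k+1)))) ≤
        eVariationOn α (Icc 0 1) := by
      rw [ENNReal.ofReal_sum_of_nonneg (fun k _ => dist_nonneg)]
      exact hsumEN n
    have h2 := ENNReal.toReal_mono hfin h1
    rwa [ENNReal.toReal_ofReal (Finset.sum_nonneg fun k _ => dist_nonneg)] at h2
  -- counting estimate
  have hcount : (n : ℝ) ≤ v + 1 := by
    have hlow : ∀ k ∈ Finset.range (n-1), (1:ℝ) ≤ dist (α (u k)) (α (u (k+1))) := by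
      intro k hk
      rw [Finset.mem_range] at hk
      have hlt : g (k+1) < m := hglt (k+1) (by omega)
      have hD := greedy_spec m D hlt
      simp only [hDdef] at hD
      exact hD.le
    have h1 : ((n-1 : ℕ) : ℝ) ≤ ∑ k ∈ Finset.range (n-1), dist (α (u k)) (α (u (k+1))) := by
      have := Finset.card_nsmul_le_sum (Finset.range (n-1))
        (fun k => dist (α (u k)) (α (u (k+1)))) 1 hlow
      simpa [nsmul_eq_mul] using this
    have h2 : ∑ k ∈ Finset.range (n-1), dist (α (u k)) (α (u (k+1))) ≤
        ∑ k ∈ Finset.range n, dist (α (u k)) (α (u (k+1))) :=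
      Finset.sum_le_sum_of_subset_of_nonneg
        (Finset.range_subset_range.2 (by omega)) (fun i _ _ => dist_nonneg)
    have h3 : ((n-1 : ℕ) : ℝ) = (n : ℝ) - 1 := by
      rw [Nat.cast_sub (by omega)]; norm_num
    rw [h3] at h1
    linarith
  -- build the path
  obtain ⟨n', hn'⟩ : ∃ n', n = n' + 1 := ⟨n - 1, by omega⟩
  set y : ℕ → Y := fun k => Φ (α (u k)) with hydef
  obtain ⟨β, hcβ, hβ0, hβ1, hβH, hβonto, hβvar⟩ := concat_path hY n' y
  rw [← hn'] at hβ1 hβH hβonto hβvar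
  have hCbound : ∀ a b : X, dist a b ≤ 2 → dist (Φ a) (Φ b) ≤ C := by
    intro a b hab
    have h1 := hΦle a b
    have h2 : K * dist a b ≤ K * 2 := mul_le_mul_of_nonneg_left hab (by linarith)
    rw [hCdef]; linarith
  refine ⟨β, hcβ.continuousOn, ?_, ?_, ?_, ?_⟩
  · rw [hβ0]; show Φ (α (u 0)) = Φ x₁; rw [hu0, hα0]
  · rw [hβ1]; show Φ (α (u n)) = Φ x₂; rw [hun, hα1]
  · -- Hausdorff estimate
    apply EMetric.hausdorffEdist_le_of_mem_edist
    · rintro z ⟨t, ht, rfl⟩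
      obtain ⟨k, hk, hd⟩ := hnear t ht
      obtain ⟨s, hs, hβs⟩ := hβonto k (by omega)
      refine ⟨β s, ⟨s, hs, rfl⟩, ?_⟩
      rw [hβs]
      show edist (Φ (α t)) (y k) ≤ ENNReal.ofReal C
      rw [edist_dist]
      exact ENNReal.ofReal_le_ofReal (hCbound _ _ hd)
    · rintro z ⟨s, hs, rfl⟩
      obtain ⟨k, hk, hd⟩ := hβH s hs
      refine ⟨y k, ⟨u k, humem k, rfl⟩, ?_⟩
      rw [edist_dist]
      apply ENNReal.ofReal_le_ofReal
      refine hd.trans ?_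
      show dist (Φ (α (u k))) (Φ (α (u (k+1)))) ≤ C
      exact hCbound _ _ (hseg k hk)
  · -- variation estimate
    have hterm : ∀ k ∈ Finset.range n, ENNReal.ofReal (dist (y k) (y (k+1))) ≤
        ENNReal.ofReal K * ENNReal.ofReal (dist (α (u k)) (α (u (k+1)))) +
          ENNReal.ofReal L := by
      intro k _
      rw [← ENNReal.ofReal_mul (by linarith), ← ENNReal.ofReal_add (by positivity) hL.le]
      exact ENNReal.ofReal_le_ofReal (hΦle _ _)
    have hE := hofv
    calc eVariationOn β (Icc 0 1)
        ≤ ∑ k ∈ Finset.range n, ENNReal.ofReal (dist (y k) (y (k+1))) := hβvar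
      _ ≤ ∑ k ∈ Finset.range n,
            (ENNReal.ofReal K * ENNReal.ofReal (dist (α (u k)) (α (u (k+1)))) +
              ENNReal.ofReal L) := Finset.sum_le_sum hterm
      _ = ENNReal.ofReal K *
            (∑ k ∈ Finset.range n, ENNReal.ofReal (dist (α (u k)) (α (u (k+1))))) +
            (n : ENNReal) * ENNReal.ofReal L := by
          rw [Finset.sum_add_distrib, ← Finset.mul_sum, Finset.sum_const,
            Finset.card_range, nsmul_eq_mul]
      _ ≤ ENNReal.ofReal K * eVariationOn α (Icc 0 1) + ENNReal.ofReal ((v+1) * L) := by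
          apply add_le_add (mul_le_mul_right (hsumEN n) _)
          rw [← ENNReal.ofReal_natCast n, ← ENNReal.ofReal_mul (Nat.cast_nonneg n)]
          exact ENNReal.ofReal_le_ofReal
            (mul_le_mul_of_nonneg_right hcount hL.le)
      _ ≤ ENNReal.ofReal K * eVariationOn α (Icc 0 1) +
            (ENNReal.ofReal L * eVariationOn α (Icc 0 1) + ENNReal.ofReal L) := by
          apply add_le_add_right
          rw [← hofv, ← ENNReal.ofReal_mul hL.le, ← ENNReal.ofReal_add (by positivity) hL.le]
          exact ENNReal.ofReal_le_ofReal (le_of_eq (by ring))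
      _ = (ENNReal.ofReal K + ENNReal.ofReal L) * eVariationOn α (Icc 0 1) +
            ENNReal.ofReal L := by ring
      _ ≤ ENNReal.ofReal C * eVariationOn α (Icc 0 1) + ENNReal.ofReal C := by
          apply add_le_add
          · apply mul_le_mul_left
            rw [← ENNReal.ofReal_add (by linarith) hL.le]
            exact ENNReal.ofReal_le_ofReal (by rw [hCdef]; linarith)
          · exact ENNReal.ofReal_le_ofReal (by rw [hCdef]; linarith)
end
end

section
/- Let X be a proper geodesic metric space and γ an M-Morse bi-infinite quasi-geodesic in X. Then there exists a Morse bi-infinite geodesic β in X such that the Hausdorff distance between γ and β is finite, and the Morse gauge of β depends only on M and the quasi-geodesic constants of γ. -/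
open Set Metric

noncomputable section

/-- auxiliary constant: bound on how far points of `γ` are from the Morse neighborhood data. -/
def M0aux (M : ℝ → ℝ → ℝ) (L : ℝ) : ℝ := max (M 1 L) 0

/-- auxiliary constant: the two-sided neighborhood bound between `γ` and approximating
geodesic segments. -/
def Daux (M : ℝ → ℝ → ℝ) (K L : ℝ) : ℝ :=
  K * (K * (2 * M0aux M L + 2 + L)) + L + M0aux M L

/-- auxiliary constant: the Hausdorff-distance bound between `γ` and the limiting geodesic. -/
def Caux (M : ℝ → ℝ → ℝ) (K L : ℝ) : ℝ := Daux M K L + 1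

private lemma min_sub_le_abs (d x y : ℝ) : min d x - min d y ≤ |x - y| := by
  rcases le_total d y with h | h
  · have h1 : min d y = d := min_eq_left h
    have h2 : min d x ≤ d := min_le_left _ _
    have := abs_nonneg (x - y)
    linarith
  · have h1 : min d y = y := min_eq_right h
    have h2 : min d x ≤ x := min_le_right _ _
    have := le_abs_self (x - y)
    linarith

private lemma max_sub_le_abs (x y : ℝ) : max 0 x - max 0 y ≤ |x - y| := by
  rcases le_total x 0 with h | h
  · have h1 : max 0 x = 0 := max_eq_left h
    have h2 : (0:ℝ) ≤ max 0 y := le_max_left _ _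
    have := abs_nonneg (x - y)
    linarith
  · have h1 : max 0 x = x := max_eq_right h
    have h2 : y ≤ max 0 y := le_max_right _ _
    have := le_abs_self (x - y)
    linarith

private lemma clamp_lip (d c x y : ℝ) :
    |max 0 (min d (x + c)) - max 0 (min d (y + c))| ≤ |x - y| := by
  have hmin : |min d (x + c) - min d (y + c)| ≤ |x - y| := by
    have h1 := min_sub_le_abs d (x + c) (y + c)
    have h2 := min_sub_le_abs d (y + c) (x + c)
    rw [show |x + c - (y + c)| = |x - y| from by congr 1; ring] at h1
    rw [show |y + c - (x + c)| = |y - x| from by congr 1; ring, abs_sub_comm y x] at h2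
    exact abs_sub_le_iff.mpr ⟨h1, h2⟩
  have h3 := max_sub_le_abs (min d (x + c)) (min d (y + c))
  have h4 := max_sub_le_abs (min d (y + c)) (min d (x + c))
  rw [abs_sub_comm (min d (y + c))] at h4
  exact abs_sub_le_iff.mpr ⟨h3.trans hmin, h4.trans hmin⟩

set_option maxHeartbeats 1600000 in
/-- In a proper geodesic space, every `M`-Morse bi-infinite `(K,L)`-quasi-geodesic is at finite
Hausdorff distance from a Morse bi-infinite geodesic, whose Morse gauge depends only on `M`,
`K`, `L`. -/
theorem morse_quasiGeodesic_close_to_morse_geodesic (M : ℝ → ℝ → ℝ) (K L : ℝ)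
    (hK : 1 ≤ K) (hL : 0 < L) :
    ∃ N : ℝ → ℝ → ℝ, ∀ (X : Type) (_ : MetricSpace X), ProperSpace X → GeodesicSpace X →
      ∀ γ : ℝ → X, IsQuasiGeodesicLine K L γ → MorseWith M γ →
        ∃ β : ℝ → X, IsGeodesicLine β ∧ MorseWith N β ∧
          EMetric.hausdorffEdist (Set.range γ) (Set.range β) ≠ ⊤ := by
  classical
  refine ⟨fun K' L' => M K' (L' + 2 * Caux M K L + 2) + Caux M K L, ?_⟩
  intro X _ hProper hGeo γ hγ hMorse
  haveI := hProper
  have hK0 : (0:ℝ) < K := lt_of_lt_of_le one_pos hK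
  have hM0 : 0 ≤ M0aux M L := le_max_right _ _
  have hMle : M 1 L ≤ M0aux M L := le_max_left _ _
  have hD0 : 0 < Daux M K L := by
    have h1 : 0 < K * (K * (2 * M0aux M L + 2 + L)) :=
      mul_pos hK0 (mul_pos hK0 (by linarith))
    unfold Daux; linarith
  have hDM : M0aux M L ≤ Daux M K L := by
    have h1 : 0 < K * (K * (2 * M0aux M L + 2 + L)) :=
      mul_pos hK0 (mul_pos hK0 (by linarith))
    unfold Daux; linarith
  have hC1 : 1 ≤ Caux M K L := by unfold Caux; linarith
  have hC0 : 0 ≤ Caux M K L := by linarith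
  -- geodesic segments from γ(-n) to γ(n)
  set d : ℕ → ℝ := fun n => dist (γ (-(n:ℝ))) (γ (n:ℝ)) with hd
  have hdnn : ∀ n, 0 ≤ d n := fun n => dist_nonneg
  have hgex : ∀ n : ℕ, ∃ g : ℝ → X, g 0 = γ (-(n:ℝ)) ∧ g (d n) = γ (n:ℝ) ∧
      ∀ s ∈ Icc (0:ℝ) (d n), ∀ t ∈ Icc (0:ℝ) (d n), dist (g s) (g t) = |s - t| :=
    fun n => hGeo _ _
  choose g hg0 hgd hgiso using hgex
  -- each point of the geodesic segment is M₀-close to γ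
  have hnear : ∀ n, ∀ r ∈ Icc (0:ℝ) (d n), ∃ v, dist (g n r) (γ v) ≤ M0aux M L := by
    intro n r hr
    have hqg : IsQGSegOn 1 L 0 (d n) (g n) := by
      intro s hsm t htm
      rw [hgiso n s hsm t htm]
      constructor
      · have : (1:ℝ)/1 = 1 := by norm_num
        rw [this]; linarith
      · linarith
    obtain ⟨v, hv⟩ := hMorse 1 L le_rfl hL 0 (d n) (hdnn n) (g n) hqg
      ⟨-(n:ℝ), hg0 n⟩ ⟨(n:ℝ), hgd n⟩ r hr
    exact ⟨v, hv.trans hMle⟩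
  -- a choice of close parameter on γ, with prescribed values at the endpoints
  have huex : ∀ n : ℕ, ∀ r : ℝ, ∃ v : ℝ,
      (r ∈ Icc (0:ℝ) (d n) → dist (g n r) (γ v) ≤ M0aux M L) ∧
      (r = d n → v = (n:ℝ)) ∧ (r = 0 → r ≠ d n → v = -(n:ℝ)) := by
    intro n r
    by_cases h1 : r = d n
    · refine ⟨(n:ℝ), fun _ => ?_, fun _ => rfl, fun _ h => absurd h1 h⟩
      rw [h1, hgd n, dist_self]; exact hM0
    · by_cases h2 : r = 0
      · refine ⟨-(n:ℝ), fun _ => ?_, fun h => absurd h h1, fun _ _ => rfl⟩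
        rw [h2, hg0 n, dist_self]; exact hM0
      · by_cases h3 : r ∈ Icc (0:ℝ) (d n)
        · obtain ⟨v, hv⟩ := hnear n r h3
          exact ⟨v, fun _ => hv, fun h => absurd h h1, fun h _ => absurd h h2⟩
        · exact ⟨0, fun h => absurd h h3, fun h => absurd h h1, fun h _ => absurd h h2⟩
  choose u hu hud hu0 using huex
  -- KEY: each γ s, |s| ≤ n, is D-close to the geodesic segment
  have key : ∀ n : ℕ, ∀ s : ℝ, -(n:ℝ) ≤ s → s ≤ (n:ℝ) →
      ∃ r ∈ Icc (0:ℝ) (d n), dist (γ s) (g n r) ≤ Daux M K L := by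
    intro n s hs1 hs2
    by_cases hdn : d n = 0
    · refine ⟨0, ⟨le_rfl, hdnn n⟩, ?_⟩
      rw [hg0 n]
      have h1 := (hγ s (-(n:ℝ))).2
      have h2 := (hγ (-(n:ℝ)) (n:ℝ)).1
      have hz : dist (γ (-(n:ℝ))) (γ (n:ℝ)) = 0 := hdn
      have hn0 : (0:ℝ) ≤ (n:ℝ) := Nat.cast_nonneg n
      have habs1 : |s - -(n:ℝ)| = s + n := by rw [abs_of_nonneg (by linarith)]; ring
      have habs2 : |(-(n:ℝ)) - (n:ℝ)| = 2*(n:ℝ) := by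
        rw [abs_of_nonpos (by linarith)]; ring
      rw [habs1] at h1
      rw [habs2, hz] at h2
      -- (1/K)*(2n) - L ≤ 0  ⇒  2n ≤ K*L
      have h3 : 2*(n:ℝ) ≤ K * L := by
        have h4 : (1/K) * (2*(n:ℝ)) ≤ L := by linarith
        have h5 := mul_le_mul_of_nonneg_left h4 hK0.le
        have h6 : K * ((1/K) * (2*(n:ℝ))) = 2*(n:ℝ) := by field_simp
        rw [h6] at h5
        exact h5
      have h7 : dist (γ s) (γ (-(n:ℝ))) ≤ K * (K*L) + L := by
        have h8 : K * (s + n) ≤ K * (2*(n:ℝ)) :=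
          mul_le_mul_of_nonneg_left (by linarith) hK0.le
        have h9 : K * (2*(n:ℝ)) ≤ K * (K*L) := mul_le_mul_of_nonneg_left h3 hK0.le
        linarith
      have h10 : K * (K*L) + L ≤ Daux M K L := by
        have h11 : K * (K * L) ≤ K * (K * (2 * M0aux M L + 2 + L)) := by
          have := mul_le_mul_of_nonneg_left
            (mul_le_mul_of_nonneg_left (show L ≤ 2 * M0aux M L + 2 + L by linarith) hK0.le)
            hK0.le
          linarith [this]
        unfold Daux; linarith
      linarith
    · have h0dn : (0:ℝ) ≠ d n := fun h => hdn h.symm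
      set A := {r : ℝ | r ∈ Icc (0:ℝ) (d n) ∧ u n r ≤ s} with hA
      have h0A : (0:ℝ) ∈ A := by
        refine ⟨⟨le_rfl, hdnn n⟩, ?_⟩
        rw [hu0 n 0 rfl h0dn]
        exact hs1
      have hAbdd : BddAbove A := ⟨d n, fun r hr => hr.1.2⟩
      have hAne : A.Nonempty := ⟨0, h0A⟩
      set r0 := sSup A with hr0
      have hr0le : r0 ≤ d n := csSup_le hAne fun r hr => hr.1.2
      have hr0ge : 0 ≤ r0 := le_csSup hAbdd h0A
      obtain ⟨r1, hr1A, hr1gt⟩ := exists_lt_of_lt_csSup hAne (show r0 - 1 < r0 by linarith)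
      have hr1le : r1 ≤ r0 := le_csSup hAbdd hr1A
      set r2 := min (r0 + 1) (d n) with hr2
      have hr2mem : r2 ∈ Icc (0:ℝ) (d n) := ⟨le_min (by linarith) (hdnn n), min_le_right _ _⟩
      have hr2ge : r0 ≤ r2 := le_min (by linarith) hr0le
      have hr2le : r2 ≤ r0 + 1 := min_le_left _ _
      have hus : s ≤ u n r2 := by
        rcases le_or_gt (u n r2) s with hc | hc
        · have hr2A : r2 ∈ A := ⟨hr2mem, hc⟩
          have hler0 : r2 ≤ r0 := le_csSup hAbdd hr2A
          have hr2d : r2 = d n := by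
            by_cases hmin : r0 + 1 ≤ d n
            · exfalso
              have : r2 = r0 + 1 := min_eq_left hmin
              linarith
            · exact min_eq_right (by linarith)
          rw [hr2d, hud n (d n) rfl]
          exact hs2
        · linarith
      have hu1 : u n r1 ≤ s := hr1A.2
      have hr1mem : r1 ∈ Icc (0:ℝ) (d n) := hr1A.1
      have hdist12 : dist (γ (u n r1)) (γ (u n r2)) ≤ 2 * M0aux M L + 2 := by
        have t1 := hu n r1 hr1mem
        have t2 := hu n r2 hr2mem
        have t3 : dist (g n r1) (g n r2) = |r1 - r2| := hgiso n r1 hr1mem r2 hr2mem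
        have t4 : |r1 - r2| ≤ 2 := by
          rw [abs_le]; constructor <;> linarith
        calc dist (γ (u n r1)) (γ (u n r2))
            ≤ dist (γ (u n r1)) (g n r1) + dist (g n r1) (g n r2) + dist (g n r2) (γ (u n r2)) :=
              dist_triangle4 _ _ _ _
          _ ≤ M0aux M L + 2 + M0aux M L := by
              rw [dist_comm (γ (u n r1)) (g n r1)]
              have := t3 ▸ t4
              have t2' : dist (g n r2) (γ (u n r2)) ≤ M0aux M L := t2
              linarith [t1, t2']
          _ = 2 * M0aux M L + 2 := by ring
      have huu : u n r2 - u n r1 ≤ K * (2 * M0aux M L + 2 + L) := by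
        have hlow := (hγ (u n r1) (u n r2)).1
        have habs : u n r2 - u n r1 ≤ |u n r1 - u n r2| := by
          rw [abs_sub_comm]; exact le_abs_self _
        have h5 : (1/K) * |u n r1 - u n r2| ≤ 2 * M0aux M L + 2 + L := by linarith
        have h6 := mul_le_mul_of_nonneg_left h5 hK0.le
        have h7 : K * ((1/K) * |u n r1 - u n r2|) = |u n r1 - u n r2| := by field_simp
        rw [h7] at h6
        linarith
      have hfinal : |s - u n r2| ≤ K * (2 * M0aux M L + 2 + L) := by
        rw [abs_sub_comm, abs_of_nonneg (by linarith)]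
        linarith
      refine ⟨r2, hr2mem, ?_⟩
      have t2 := hu n r2 hr2mem
      have hup := (hγ s (u n r2)).2
      have h8 : K * |s - u n r2| ≤ K * (K * (2 * M0aux M L + 2 + L)) :=
        mul_le_mul_of_nonneg_left hfinal hK0.le
      calc dist (γ s) (g n r2)
          ≤ dist (γ s) (γ (u n r2)) + dist (γ (u n r2)) (g n r2) := dist_triangle _ _ _
        _ ≤ (K * |s - u n r2| + L) + M0aux M L := by
            rw [dist_comm (γ (u n r2)) (g n r2)]
            linarith [t2]
        _ ≤ Daux M K L := by unfold Daux; linarith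
  -- centering point on the geodesic segment
  have hcex : ∀ n : ℕ, ∃ cc ∈ Icc (0:ℝ) (d n), dist (γ 0) (g n cc) ≤ Daux M K L := by
    intro n
    exact key n 0 (neg_nonpos.mpr (Nat.cast_nonneg n)) (Nat.cast_nonneg n)
  choose c hcmem hcD using hcex
  -- the reparametrized, clamped geodesic segments
  set clamp : ℕ → ℝ → ℝ := fun n t => max 0 (min (d n) (t + c n)) with hclamp
  set bn : ℕ → ℝ → X := fun n t => g n (clamp n t) with hbn
  have hclampmem : ∀ n t, clamp n t ∈ Icc (0:ℝ) (d n) :=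
    fun n t => ⟨le_max_left _ _, max_le (hdnn n) (min_le_left _ _)⟩
  have hcl_eq : ∀ n : ℕ, ∀ t : ℝ, -(c n) ≤ t → t ≤ d n - c n → clamp n t = t + c n := by
    intro n t h1 h2
    show max 0 (min (d n) (t + c n)) = t + c n
    rw [min_eq_right (by linarith), max_eq_right (by linarith)]
  have hlip : ∀ n : ℕ, ∀ s t : ℝ, dist (bn n s) (bn n t) ≤ |s - t| := by
    intro n s t
    show dist (g n (clamp n s)) (g n (clamp n t)) ≤ |s - t|
    rw [hgiso n _ (hclampmem n s) _ (hclampmem n t)]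
    exact clamp_lip (d n) (c n) s t
  have hb0 : ∀ n, dist (γ 0) (bn n 0) ≤ Daux M K L := by
    intro n
    have h1 : clamp n 0 = c n := by
      show max 0 (min (d n) (0 + c n)) = c n
      rw [zero_add, min_eq_right (hcmem n).2, max_eq_right (hcmem n).1]
    show dist (γ 0) (g n (clamp n 0)) ≤ Daux M K L
    rw [h1]; exact hcD n
  -- lower bounds on c n and d n - c n
  have hcn_lb : ∀ n : ℕ, (n:ℝ)/K - L - Daux M K L ≤ c n := by
    intro n
    have h1 := (hγ (-(n:ℝ)) 0).1
    have habs : |(-(n:ℝ)) - 0| = (n:ℝ) := by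
      rw [sub_zero, abs_neg, abs_of_nonneg (Nat.cast_nonneg n)]
    rw [habs] at h1
    have h3 : dist (γ (-(n:ℝ))) (g n (c n)) = c n := by
      rw [← hg0 n, hgiso n 0 ⟨le_rfl, hdnn n⟩ (c n) (hcmem n), zero_sub, abs_neg,
        abs_of_nonneg (hcmem n).1]
    have h2 : dist (γ (-(n:ℝ))) (γ 0) ≤ c n + Daux M K L := by
      calc dist (γ (-(n:ℝ))) (γ 0)
          ≤ dist (γ (-(n:ℝ))) (g n (c n)) + dist (g n (c n)) (γ 0) := dist_triangle _ _ _
        _ ≤ c n + Daux M K L := by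
            rw [h3, dist_comm]; linarith [hcD n]
    have h4 : (1/K) * (n:ℝ) = (n:ℝ)/K := one_div_mul_eq_div K (n:ℝ)
    linarith
  have hdc_lb : ∀ n : ℕ, (n:ℝ)/K - L - Daux M K L ≤ d n - c n := by
    intro n
    have h1 := (hγ (n:ℝ) 0).1
    have habs : |(n:ℝ) - 0| = (n:ℝ) := by
      rw [sub_zero, abs_of_nonneg (Nat.cast_nonneg n)]
    rw [habs] at h1
    have h3 : dist (γ (n:ℝ)) (g n (c n)) = d n - c n := by
      rw [← hgd n, hgiso n (d n) ⟨hdnn n, le_rfl⟩ (c n) (hcmem n),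
        abs_of_nonneg (by linarith [(hcmem n).2])]
    have h2 : dist (γ (n:ℝ)) (γ 0) ≤ (d n - c n) + Daux M K L := by
      calc dist (γ (n:ℝ)) (γ 0)
          ≤ dist (γ (n:ℝ)) (g n (c n)) + dist (g n (c n)) (γ 0) := dist_triangle _ _ _
        _ ≤ (d n - c n) + Daux M K L := by
            rw [h3, dist_comm]; linarith [hcD n]
    have h4 : (1/K) * (n:ℝ) = (n:ℝ)/K := one_div_mul_eq_div K (n:ℝ)
    linarith
  -- the ultrafilter
  set F : Ultrafilter ℕ := Filter.hyperfilter ℕ with hF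
  have hFcof : (F : Filter ℕ) ≤ Filter.cofinite := Filter.hyperfilter_le_cofinite
  have hnat : ∀ r : ℝ, ∀ᶠ n : ℕ in (F : Filter ℕ), r ≤ (n:ℝ) := by
    intro r
    have h1 : ∀ᶠ n : ℕ in Filter.atTop, r ≤ (n:ℝ) :=
      tendsto_natCast_atTop_atTop.eventually_ge_atTop r
    exact hFcof (Nat.cofinite_eq_atTop ▸ h1)
  have hev : ∀ s : ℝ, ∀ᶠ n : ℕ in (F : Filter ℕ), -(c n) ≤ s ∧ s ≤ d n - c n := by
    intro s
    filter_upwards [hnat (K * (|s| + L + Daux M K L))] with n hn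
    have hs' : |s| + L + Daux M K L ≤ (n:ℝ)/K := by
      rw [le_div_iff₀ hK0]
      linarith [mul_comm K (|s| + L + Daux M K L)]
    have hc1 := hcn_lb n
    have hc2 := hdc_lb n
    have ha1 := neg_abs_le s
    have ha2 := le_abs_self s
    constructor <;> linarith
  -- the limit geodesic line
  have hball : ∀ t : ℝ, ∀ n : ℕ, bn n t ∈ closedBall (γ 0) (Daux M K L + |t|) := by
    intro t n
    rw [mem_closedBall, dist_comm]
    calc dist (γ 0) (bn n t) ≤ dist (γ 0) (bn n 0) + dist (bn n 0) (bn n t) :=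
          dist_triangle _ _ _
      _ ≤ Daux M K L + |t| := by
          have h1 := hlip n 0 t
          have h2 : |(0:ℝ) - t| = |t| := by rw [zero_sub, abs_neg]
          rw [h2] at h1
          linarith [hb0 n]
  have hbex : ∀ t : ℝ, ∃ x : X, Filter.Tendsto (fun n => bn n t) (F : Filter ℕ) (nhds x) := by
    intro t
    obtain ⟨x, -, hx⟩ := (isCompact_closedBall (γ 0) (Daux M K L + |t|)).ultrafilter_le_nhds
      (F.map fun n => bn n t) (by
        rw [Ultrafilter.coe_map]
        exact Filter.le_principal_iff.mpr (Filter.mem_map.mpr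
          (Filter.univ_mem' fun n => hball t n)))
    rw [Ultrafilter.coe_map] at hx
    exact ⟨x, hx⟩
  choose β hβ using hbex
  haveI : (F : Filter ℕ).NeBot := F.neBot
  have hβgeo : IsGeodesicLine β := by
    intro s t
    have h1 : Filter.Tendsto (fun n => dist (bn n s) (bn n t)) (F : Filter ℕ)
        (nhds (dist (β s) (β t))) := (hβ s).dist (hβ t)
    have h2 : ∀ᶠ n in (F : Filter ℕ), dist (bn n s) (bn n t) = |s - t| := by
      filter_upwards [hev s, hev t] with n hns hnt
      show dist (g n (clamp n s)) (g n (clamp n t)) = |s - t|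
      rw [hgiso n _ (hclampmem n s) _ (hclampmem n t), hcl_eq n s hns.1 hns.2,
        hcl_eq n t hnt.1 hnt.2]
      congr 1; ring
    have h2' : (fun n => dist (bn n s) (bn n t)) =ᶠ[(F : Filter ℕ)]
        (fun _ => |s - t|) := h2
    have h3 : Filter.Tendsto (fun n => dist (bn n s) (bn n t)) (F : Filter ℕ)
        (nhds |s - t|) := Filter.Tendsto.congr' h2'.symm tendsto_const_nhds
    exact tendsto_nhds_unique h1 h3
  -- every point of β is close to γ
  have hbg : ∀ t : ℝ, ∃ z : ℝ, dist (β t) (γ z) ≤ M0aux M L + 1 := by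
    intro t
    have h1 : ∀ᶠ n in (F : Filter ℕ), dist (bn n t) (β t) < 1 :=
      Metric.tendsto_nhds.mp (hβ t) 1 one_pos
    obtain ⟨n, hn⟩ := h1.exists
    obtain ⟨z, hz⟩ := hnear n (clamp n t) (hclampmem n t)
    refine ⟨z, ?_⟩
    have hb : dist (bn n t) (γ z) ≤ M0aux M L := hz
    calc dist (β t) (γ z) ≤ dist (β t) (bn n t) + dist (bn n t) (γ z) := dist_triangle _ _ _
      _ ≤ M0aux M L + 1 := by rw [dist_comm (β t) (bn n t)]; linarith
  -- every point of γ is close to β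
  have hgb : ∀ s : ℝ, ∃ t : ℝ, dist (γ s) (β t) ≤ Caux M K L := by
    intro s
    have hexr : ∀ n : ℕ, ∃ tt : ℝ, -(n:ℝ) ≤ s → s ≤ (n:ℝ) →
        dist (γ s) (bn n tt) ≤ Daux M K L ∧
        |tt| ≤ Daux M K L + (K * |s| + L) + Daux M K L := by
      intro n
      by_cases h : -(n:ℝ) ≤ s ∧ s ≤ (n:ℝ)
      · obtain ⟨r, hrmem, hrD⟩ := key n s h.1 h.2
        refine ⟨r - c n, fun _ _ => ⟨?_, ?_⟩⟩
        · have hcl : clamp n (r - c n) = r := by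
            show max 0 (min (d n) (r - c n + c n)) = r
            rw [sub_add_cancel, min_eq_right hrmem.2, max_eq_right hrmem.1]
          show dist (γ s) (g n (clamp n (r - c n))) ≤ Daux M K L
          rw [hcl]; exact hrD
        · have h1 : dist (g n r) (g n (c n)) = |r - c n| := hgiso n r hrmem (c n) (hcmem n)
          have h2 : dist (γ s) (γ 0) ≤ K * |s| + L := by
            have := (hγ s 0).2
            rwa [sub_zero] at this
          calc |r - c n| = dist (g n r) (g n (c n)) := h1.symm
            _ ≤ dist (g n r) (γ s) + dist (γ s) (γ 0) + dist (γ 0) (g n (c n)) :=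
                dist_triangle4 _ _ _ _
            _ ≤ Daux M K L + (K * |s| + L) + Daux M K L := by
                rw [dist_comm (g n r) (γ s)]
                linarith [hrD, hcD n]
      · exact ⟨0, fun h1 h2 => absurd ⟨h1, h2⟩ h⟩
    choose tt htt using hexr
    set B := Daux M K L + (K * |s| + L) + Daux M K L with hB
    have hevn : ∀ᶠ n : ℕ in (F : Filter ℕ), -(n:ℝ) ≤ s ∧ s ≤ (n:ℝ) := by
      filter_upwards [hnat |s|] with n hn
      exact ⟨by linarith [neg_abs_le s], by linarith [le_abs_self s]⟩
    have httmem : ∀ᶠ n : ℕ in (F : Filter ℕ), tt n ∈ Icc (-B) B := by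
      filter_upwards [hevn] with n hn
      have h1 := (htt n hn.1 hn.2).2
      rw [mem_Icc]
      constructor
      · linarith [neg_abs_le (tt n)]
      · linarith [le_abs_self (tt n)]
    obtain ⟨t0, -, ht0⟩ := isCompact_Icc.ultrafilter_le_nhds (F.map tt) (by
      rw [Ultrafilter.coe_map]
      exact Filter.le_principal_iff.mpr (Filter.mem_map.mpr httmem))
    rw [Ultrafilter.coe_map] at ht0
    have h1 : ∀ᶠ n in (F : Filter ℕ), |tt n - t0| < 1/2 := by
      have h := Metric.tendsto_nhds.mp ht0 (1/2) (by norm_num)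
      simpa [Real.dist_eq] using h
    have h2 : ∀ᶠ n in (F : Filter ℕ), dist (bn n t0) (β t0) < 1/2 :=
      Metric.tendsto_nhds.mp (hβ t0) (1/2) (by norm_num)
    obtain ⟨n, hn1, hn2, hn3⟩ := (h1.and (h2.and hevn)).exists
    obtain ⟨hda, hdb⟩ := htt n hn3.1 hn3.2
    refine ⟨t0, ?_⟩
    calc dist (γ s) (β t0)
        ≤ dist (γ s) (bn n (tt n)) + dist (bn n (tt n)) (bn n t0) + dist (bn n t0) (β t0) :=
          dist_triangle4 _ _ _ _
      _ ≤ Daux M K L + |tt n - t0| + 1/2 :=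
          add_le_add (add_le_add hda (hlip n (tt n) t0)) hn2.le
      _ ≤ Caux M K L := by unfold Caux; linarith
  refine ⟨β, hβgeo, ?_, ?_⟩
  · -- β is Morse with the new gauge
    intro K' L' hK' hL' a b hab σ hσ hpa hqb s hs
    obtain ⟨p, hp⟩ := hpa
    obtain ⟨q, hq⟩ := hqb
    obtain ⟨up, hup⟩ := hbg p
    obtain ⟨uq, huq⟩ := hbg q
    have hCM : M0aux M L + 1 ≤ Caux M K L := by unfold Caux; linarith
    have hup' : dist (σ a) (γ up) ≤ Caux M K L := by rw [hp]; linarith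
    have huq' : dist (σ b) (γ uq) ≤ Caux M K L := by rw [hq]; linarith
    have hK'0 : (0:ℝ) < K' := lt_of_lt_of_le one_pos hK'
    have hinv : 1/K' ≤ 1 := by rw [div_le_one hK'0]; exact hK'
    have hinv0 : (0:ℝ) < 1/K' := by positivity
    set C := Caux M K L with hCdef
    set L'' := L' + 2 * C + 2 with hL''def
    have hL''0 : 0 < L'' := by rw [hL''def]; linarith
    set σ' : ℝ → X := fun z => if z < a then γ up else if z ≤ b then σ z else γ uq with hσ'def
    have ev1 : ∀ z, z < a → σ' z = γ up := by
      intro z hz; simp only [hσ'def]; rw [if_pos hz]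
    have ev2 : ∀ z, a ≤ z → z ≤ b → σ' z = σ z := by
      intro z h1 h2; simp only [hσ'def]; rw [if_neg (not_lt.mpr h1), if_pos h2]
    have ev3 : ∀ z, b < z → σ' z = γ uq := by
      intro z hz; simp only [hσ'def]
      rw [if_neg (not_lt.mpr (le_trans hab hz.le)), if_neg (not_le.mpr hz)]
    have main : ∀ x ∈ Icc (a-1) (b+1), ∀ y ∈ Icc (a-1) (b+1), x ≤ y →
        (1/K') * |x - y| - L'' ≤ dist (σ' x) (σ' y) ∧
        dist (σ' x) (σ' y) ≤ K' * |x - y| + L'' := by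
      intro x hx y hy hxy
      have habs : |x - y| = y - x := by
        rw [abs_sub_comm]; exact abs_of_nonneg (by linarith)
      rcases lt_or_ge x a with hxa | hxa
      · rcases lt_or_ge y a with hya | hya
        · -- both in the left constant region
          rw [ev1 x hxa, ev1 y hya, dist_self, habs]
          have h1 : y - x ≤ 1 := by linarith [hx.1]
          have h2 : (1/K') * (y - x) ≤ y - x := by nlinarith
          constructor
          · rw [hL''def]; linarith
          · have : 0 ≤ K' * (y - x) := mul_nonneg hK'0.le (by linarith)
            rw [hL''def]; linarith
        · rcases le_or_gt y b with hyb | hyb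
          · -- x left, y middle
            rw [ev1 x hxa, ev2 y hya hyb, habs]
            obtain ⟨hlo, hhi⟩ := hσ a ⟨le_rfl, hab⟩ y ⟨hya, hyb⟩
            have habs2 : |a - y| = y - a := by
              rw [abs_sub_comm]; exact abs_of_nonneg (by linarith)
            rw [habs2] at hlo hhi
            have t1 : dist (γ up) (σ y) ≤ dist (σ a) (σ y) + C := by
              have := dist_triangle (γ up) (σ a) (σ y)
              rw [dist_comm (γ up) (σ a)] at this
              linarith
            have t2 : dist (σ a) (σ y) ≤ dist (γ up) (σ y) + C := by
              have := dist_triangle (σ a) (γ up) (σ y)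
              linarith
            have hax : a - x ≤ 1 := by linarith [hx.1]
            have hring : (1/K') * (y - x) = (1/K') * (y - a) + (1/K') * (a - x) := by ring
            have hmono : (1/K') * (a - x) ≤ a - x := by nlinarith
            have hring2 : K' * (y - x) = K' * (y - a) + K' * (a - x) := by ring
            have hmono2 : 0 ≤ K' * (a - x) := mul_nonneg hK'0.le (by linarith)
            constructor
            · rw [hL''def]; linarith
            · rw [hL''def]; linarith
          · -- x left, y right
            rw [ev1 x hxa, ev3 y hyb, habs]
            obtain ⟨hlo, hhi⟩ := hσ a ⟨le_rfl, hab⟩ b ⟨hab, le_rfl⟩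
            have habs2 : |a - b| = b - a := by
              rw [abs_sub_comm]; exact abs_of_nonneg (by linarith)
            rw [habs2] at hlo hhi
            have t1 : dist (γ up) (γ uq) ≤ dist (σ a) (σ b) + 2*C := by
              have h3 := dist_triangle4 (γ up) (σ a) (σ b) (γ uq)
              rw [dist_comm (γ up) (σ a)] at h3
              linarith
            have t2 : dist (σ a) (σ b) ≤ dist (γ up) (γ uq) + 2*C := by
              have h3 := dist_triangle4 (σ a) (γ up) (γ uq) (σ b)
              rw [dist_comm (γ uq) (σ b)] at h3
              linarith
            have hd1 : b - a ≤ y - x := by linarith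
            have hd2 : y - x ≤ (b - a) + 2 := by linarith [hx.1, hy.2]
            have hring : (1/K') * (y - x) = (1/K') * (b - a) + (1/K') * ((y-x) - (b-a)) := by
              ring
            have hmono : (1/K') * ((y-x) - (b-a)) ≤ (y-x) - (b-a) := by nlinarith
            have hmono2 : K' * (b - a) ≤ K' * (y - x) :=
              mul_le_mul_of_nonneg_left hd1 hK'0.le
            constructor
            · rw [hL''def]; linarith
            · rw [hL''def]; linarith
      · rcases le_or_gt y b with hyb | hyb
        · -- both middle
          have hxb : x ≤ b := le_trans hxy hyb
          have hya : a ≤ y := le_trans hxa hxy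
          rw [ev2 x hxa hxb, ev2 y hya hyb]
          obtain ⟨hlo, hhi⟩ := hσ x ⟨hxa, hxb⟩ y ⟨hya, hyb⟩
          constructor
          · rw [hL''def]; linarith
          · rw [hL''def]; linarith
        · rcases le_or_gt x b with hxb | hxb
          · -- x middle, y right
            rw [ev2 x hxa hxb, ev3 y hyb, habs]
            obtain ⟨hlo, hhi⟩ := hσ x ⟨hxa, hxb⟩ b ⟨hab, le_rfl⟩
            have habs2 : |x - b| = b - x := by
              rw [abs_sub_comm]; exact abs_of_nonneg (by linarith)
            rw [habs2] at hlo hhi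
            have t1 : dist (σ x) (γ uq) ≤ dist (σ x) (σ b) + C := by
              have := dist_triangle (σ x) (σ b) (γ uq)
              linarith
            have t2 : dist (σ x) (σ b) ≤ dist (σ x) (γ uq) + C := by
              have := dist_triangle (σ x) (γ uq) (σ b)
              rw [dist_comm (γ uq) (σ b)] at this
              linarith
            have hby : y - b ≤ 1 := by linarith [hy.2]
            have hring : (1/K') * (y - x) = (1/K') * (b - x) + (1/K') * (y - b) := by ring
            have hmono : (1/K') * (y - b) ≤ y - b := by nlinarith
            have hring2 : K' * (y - x) = K' * (b - x) + K' * (y - b) := by ring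
            have hmono2 : 0 ≤ K' * (y - b) := mul_nonneg hK'0.le (by linarith)
            constructor
            · rw [hL''def]; linarith
            · rw [hL''def]; linarith
          · -- both right
            rw [ev3 x hxb, ev3 y (lt_of_lt_of_le hxb hxy), dist_self, habs]
            have h1 : y - x ≤ 1 := by linarith [hy.2]
            have h2 : (1/K') * (y - x) ≤ y - x := by nlinarith
            constructor
            · rw [hL''def]; linarith
            · have : 0 ≤ K' * (y - x) := mul_nonneg hK'0.le (by linarith)
              rw [hL''def]; linarith
    have hσ'qg : IsQGSegOn K' L'' (a-1) (b+1) σ' := by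
      intro z1 h1 z2 h2
      rcases le_total z1 z2 with h | h
      · exact main z1 h1 z2 h2 h
      · obtain ⟨hl, hh⟩ := main z2 h2 z1 h1 h
        rw [dist_comm (σ' z2) (σ' z1), abs_sub_comm z2 z1] at hl hh
        exact ⟨hl, hh⟩
    have hend1 : σ' (a-1) = γ up := ev1 _ (by linarith)
    have hend2 : σ' (b+1) = γ uq := ev3 _ (by linarith)
    obtain ⟨z, hz⟩ := hMorse K' L'' hK' hL''0 (a-1) (b+1) (by linarith) σ' hσ'qg
      ⟨up, hend1⟩ ⟨uq, hend2⟩ s ⟨by linarith [hs.1], by linarith [hs.2]⟩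
    obtain ⟨t', ht'⟩ := hgb z
    refine ⟨t', ?_⟩
    rw [ev2 s hs.1 hs.2] at hz
    rw [hL''def] at hz
    show dist (σ s) (β t') ≤ M K' (L' + 2 * C + 2) + C
    calc dist (σ s) (β t') ≤ dist (σ s) (γ z) + dist (γ z) (β t') := dist_triangle _ _ _
      _ ≤ M K' (L' + 2 * C + 2) + C := add_le_add hz ht'
  · -- finite Hausdorff distance
    have hHaus : EMetric.hausdorffEdist (range γ) (range β) ≤
        ENNReal.ofReal (Caux M K L) := by
      apply EMetric.hausdorffEdist_le_of_mem_edist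
      · rintro x ⟨sx, rfl⟩
        obtain ⟨t, ht⟩ := hgb sx
        exact ⟨β t, mem_range_self t, by rw [edist_dist]; exact ENNReal.ofReal_le_ofReal ht⟩
      · rintro x ⟨t, rfl⟩
        obtain ⟨z, hz⟩ := hbg t
        refine ⟨γ z, mem_range_self z, ?_⟩
        rw [edist_dist]
        apply ENNReal.ofReal_le_ofReal
        have : M0aux M L + 1 ≤ Caux M K L := by unfold Caux; linarith
        linarith
    exact ne_top_of_le_ne_top ENNReal.ofReal_ne_top hHaus
end
end

section
/- Let γ be a Morse quasi-geodesic in a geodesic space. Then for all constants K ≥ 1 and L > 0 there exists M = M(K,L) such that for every (K,L)-quasi-geodesic σ with endpoints γ(t₁) and γ(t₂) (t₁ < t₂) on γ, the Hausdorff distance between σ and γ([t₁,t₂]) is at most M. -/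
open Set Metric

noncomputable section

private lemma coarse_ivt (A B c d u : ℝ) (hA : 0 ≤ A) (τ : ℝ → ℝ) (hcd : c ≤ d)
    (hup : ∀ s ∈ Set.Icc c d, ∀ s' ∈ Set.Icc c d, |τ s - τ s'| ≤ A * |s - s'| + B)
    (h1 : τ c ≤ u) (h2 : u ≤ τ d) : ∃ s ∈ Set.Icc c d, |τ s - u| ≤ A + B := by
  set S : Set ℝ := {s | s ∈ Set.Icc c d ∧ τ s ≤ u} with hS
  have hcS : c ∈ S := ⟨⟨le_refl c, hcd⟩, h1⟩
  have hbdd : BddAbove S := ⟨d, fun x hx => hx.1.2⟩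
  set s₀ := sSup S with hs₀def
  have hcs₀ : c ≤ s₀ := le_csSup hbdd hcS
  have hs₀d : s₀ ≤ d := csSup_le ⟨c, hcS⟩ (fun x hx => hx.1.2)
  obtain ⟨s, hsS, hss⟩ : ∃ s ∈ S, s₀ - 1/2 < s :=
    exists_lt_of_lt_csSup ⟨c, hcS⟩ (by linarith)
  have hsle : s ≤ s₀ := le_csSup hbdd hsS
  set s' := min (s₀ + 1/2) d with hs'def
  have hs'mem : s' ∈ Set.Icc c d := ⟨le_min (by linarith) hcd, min_le_right _ _⟩
  have hus' : u ≤ τ s' := by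
    rcases le_or_gt (s₀ + 1/2) d with h | h
    · have hs'eq : s' = s₀ + 1/2 := min_eq_left h
      by_contra hc
      push_neg at hc
      have hmem : s' ∈ S := ⟨hs'mem, le_of_lt hc⟩
      have := le_csSup hbdd hmem
      rw [hs'eq] at this; linarith
    · have hs'eq : s' = d := min_eq_right h.le
      rw [hs'eq]; exact h2
  have hss' : s ≤ s' := le_min (by linarith) hsS.1.2
  have hd1 : s' - s ≤ 1 := by
    have : s' ≤ s₀ + 1/2 := min_le_left _ _
    linarith
  have hub := hup s' hs'mem s hsS.1
  rw [abs_of_nonneg (by linarith : (0:ℝ) ≤ s' - s)] at hub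
  refine ⟨s, hsS.1, ?_⟩
  have h3 : τ s' - τ s ≤ |τ s' - τ s| := le_abs_self _
  have h4 : u - τ s ≤ τ s' - τ s := by linarith [hus']
  have h5 : |τ s - u| = u - τ s := by
    rw [abs_sub_comm]; exact abs_of_nonneg (by linarith [hsS.2])
  rw [h5]
  nlinarith [mul_le_mul_of_nonneg_left hd1 hA]

private lemma one_d_lower (A B a b t₁ t₂ : ℝ) (hA : 0 ≤ A) (hB : 0 ≤ B) (τ : ℝ → ℝ)
    (hab : a ≤ b)
    (hup : ∀ s ∈ Set.Icc a b, ∀ s' ∈ Set.Icc a b, |τ s - τ s'| ≤ A * |s - s'| + B)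
    (hlo : ∀ s ∈ Set.Icc a b, ∀ s' ∈ Set.Icc a b, |s - s'| ≤ A * |τ s - τ s'| + B)
    (hτa : τ a = t₁) (hτb : τ b = t₂) (h12 : t₁ ≤ t₂) :
    ∀ s ∈ Set.Icc a b, t₁ - (2*(A*(2*A*(A+B)+B) + A + 2*B)) ≤ τ s := by
  intro s hs
  rcases le_or_gt t₁ (τ s) with h | h
  · nlinarith [mul_nonneg hA (by nlinarith : (0:ℝ) ≤ 2*A*(A+B)+B)]
  set u₀ := (t₁ + τ s) / 2 with hu₀
  have h1 : τ s ≤ u₀ := by rw [hu₀]; linarith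
  have h2 : u₀ ≤ t₁ := by rw [hu₀]; linarith
  -- descending IVT on [a, s]
  obtain ⟨s₁, hs₁mem, hs₁⟩ : ∃ x ∈ Set.Icc a s, |(fun y => -τ y) x - (-u₀)| ≤ A + B := by
    apply coarse_ivt A B a s (-u₀) hA _ hs.1
    · intro x hx y hy
      have hx' : x ∈ Set.Icc a b := ⟨hx.1, le_trans hx.2 hs.2⟩
      have hy' : y ∈ Set.Icc a b := ⟨hy.1, le_trans hy.2 hs.2⟩
      have hxy := hup x hx' y hy'
      calc |(fun y => -τ y) x - (fun y => -τ y) y| = |τ x - τ y| := by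
            simp only []
            rw [show (-τ x) - (-τ y) = -(τ x - τ y) by ring, abs_neg]
        _ ≤ A * |x - y| + B := hxy
    · show -τ a ≤ -u₀
      rw [hτa]; linarith
    · show -u₀ ≤ -τ s
      linarith
  have hs₁' : |τ s₁ - u₀| ≤ A + B := by
    have : |(fun y => -τ y) s₁ - (-u₀)| = |τ s₁ - u₀| := by
      simp only []
      rw [show (-τ s₁) - (-u₀) = -(τ s₁ - u₀) by ring, abs_neg]
    rwa [this] at hs₁
  -- ascending IVT on [s, b]
  obtain ⟨s₂, hs₂mem, hs₂⟩ : ∃ x ∈ Set.Icc s b, |τ x - u₀| ≤ A + B := by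
    apply coarse_ivt A B s b u₀ hA _ hs.2
    · intro x hx y hy
      exact hup x ⟨le_trans hs.1 hx.1, hx.2⟩ y ⟨le_trans hs.1 hy.1, hy.2⟩
    · exact h1
    · rw [hτb]; linarith
  have hm1 : s₁ ∈ Set.Icc a b := ⟨hs₁mem.1, le_trans hs₁mem.2 hs.2⟩
  have hm2 : s₂ ∈ Set.Icc a b := ⟨le_trans hs.1 hs₂mem.1, hs₂mem.2⟩
  have h12' : |τ s₁ - τ s₂| ≤ 2*(A+B) := by
    have ht := abs_sub_le (τ s₁) u₀ (τ s₂)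
    have : |u₀ - τ s₂| = |τ s₂ - u₀| := abs_sub_comm _ _
    linarith
  have hE := hlo s₁ hm1 s₂ hm2
  have hEb : |s₁ - s₂| ≤ 2*A*(A+B) + B := by
    nlinarith [mul_le_mul_of_nonneg_left h12' hA]
  have hs12 : |s₁ - s₂| = s₂ - s₁ := by
    rw [abs_sub_comm]; exact abs_of_nonneg (by linarith [hs₁mem.2, hs₂mem.1])
  have hssb : |s - s₁| ≤ 2*A*(A+B) + B := by
    rw [abs_of_nonneg (by linarith [hs₁mem.2] : (0:ℝ) ≤ s - s₁)]
    rw [hs12] at hEb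
    linarith [hs₂mem.1]
  have hts : |τ s - τ s₁| ≤ A*(2*A*(A+B)+B) + B := by
    have := hup s hs s₁ hm1
    nlinarith [mul_le_mul_of_nonneg_left hssb hA]
  have e2 : u₀ - τ s ≤ |τ s₁ - u₀| + |τ s - τ s₁| := by
    have a1 : u₀ - τ s₁ ≤ |τ s₁ - u₀| := by
      rw [abs_sub_comm]; exact le_abs_self _
    have a2 : τ s₁ - τ s ≤ |τ s - τ s₁| := by
      rw [abs_sub_comm]; exact le_abs_self _
    linarith
  have e1 : u₀ - τ s = (t₁ - τ s)/2 := by rw [hu₀]; ring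
  linarith [hs₁', hts]

private lemma one_d_upper (A B a b t₁ t₂ : ℝ) (hA : 0 ≤ A) (hB : 0 ≤ B) (τ : ℝ → ℝ)
    (hab : a ≤ b)
    (hup : ∀ s ∈ Set.Icc a b, ∀ s' ∈ Set.Icc a b, |τ s - τ s'| ≤ A * |s - s'| + B)
    (hlo : ∀ s ∈ Set.Icc a b, ∀ s' ∈ Set.Icc a b, |s - s'| ≤ A * |τ s - τ s'| + B)
    (hτa : τ a = t₁) (hτb : τ b = t₂) (h12 : t₁ ≤ t₂) :
    ∀ s ∈ Set.Icc a b, τ s ≤ t₂ + (2*(A*(2*A*(A+B)+B) + A + 2*B)) := by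
  intro s hs
  have hmem' : ∀ x ∈ Set.Icc a b, a + b - x ∈ Set.Icc a b := by
    intro x hx
    exact ⟨by linarith [hx.2], by linarith [hx.1]⟩
  have key := one_d_lower A B a b (-t₂) (-t₁) hA hB (fun x => -τ (a + b - x)) hab ?_ ?_ ?_ ?_ (by linarith)
  · have hmem : a + b - s ∈ Set.Icc a b := hmem' s hs
    have := key (a + b - s) hmem
    beta_reduce at this
    rw [show a + b - (a + b - s) = s by ring] at this
    linarith
  · intro x hx y hy
    have := hup (a+b-x) (hmem' x hx) (a+b-y) (hmem' y hy)
    have e : |(a+b-x) - (a+b-y)| = |x - y| := by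
      rw [show (a+b-x) - (a+b-y) = -(x - y) by ring, abs_neg]
    rw [e] at this
    calc |(fun x => -τ (a + b - x)) x - (fun x => -τ (a + b - x)) y|
        = |τ (a+b-x) - τ (a+b-y)| := by
          simp only []
          rw [show (-τ (a+b-x)) - (-τ (a+b-y)) = -(τ (a+b-x) - τ (a+b-y)) by ring, abs_neg]
      _ ≤ A * |x - y| + B := this
  · intro x hx y hy
    have := hlo (a+b-x) (hmem' x hx) (a+b-y) (hmem' y hy)
    have e : |(a+b-x) - (a+b-y)| = |x - y| := by
      rw [show (a+b-x) - (a+b-y) = -(x - y) by ring, abs_neg]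
    rw [e] at this
    have e2 : |(fun x => -τ (a + b - x)) x - (fun x => -τ (a + b - x)) y|
        = |τ (a+b-x) - τ (a+b-y)| := by
      simp only []
      rw [show (-τ (a+b-x)) - (-τ (a+b-y)) = -(τ (a+b-x) - τ (a+b-y)) by ring, abs_neg]
    rw [e2]
    exact this
  · beta_reduce
    rw [show a + b - a = b by ring, hτb]
  · beta_reduce
    rw [show a + b - b = a by ring, hτa]

private lemma hausdorff_helper {X : Type*} [MetricSpace X] (s t : Set X) (M : ℝ) (hM : 0 ≤ M)
    (h1 : ∀ x ∈ s, ∃ y ∈ t, dist x y ≤ M) (h2 : ∀ x ∈ t, ∃ y ∈ s, dist x y ≤ M) :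
    EMetric.hausdorffEdist s t ≤ ENNReal.ofReal M := by
  apply EMetric.hausdorffEdist_le_of_mem_edist
  · intro x hx
    obtain ⟨y, hy, hd⟩ := h1 x hx
    exact ⟨y, hy, (edist_le_ofReal hM).2 hd⟩
  · intro x hx
    obtain ⟨y, hy, hd⟩ := h2 x hx
    exact ⟨y, hy, (edist_le_ofReal hM).2 hd⟩

/-- If `γ` is a Morse quasi-geodesic then for all `K ≥ 1`, `L > 0` there is `M = M(K,L)` such
that every `(K,L)`-quasi-geodesic segment `σ` with endpoints `γ t₁`, `γ t₂` (`t₁ < t₂`) is at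
Hausdorff distance at most `M` from `γ [t₁, t₂]`. -/
theorem morse_hausdorff_close {X : Type*} [MetricSpace X] (hX : GeodesicSpace X)
    (Kγ Lγ : ℝ) (γ : ℝ → X) (hγ : IsQuasiGeodesicLine Kγ Lγ γ)
    (N : ℝ → ℝ → ℝ) (hN : MorseWith N γ) :
    ∀ K L : ℝ, 1 ≤ K → 0 < L → ∃ M : ℝ,
      ∀ (a b t₁ t₂ : ℝ) (σ : ℝ → X), a ≤ b → t₁ < t₂ → IsQGSegOn K L a b σ →
        σ a = γ t₁ → σ b = γ t₂ →
        EMetric.hausdorffEdist (σ '' Set.Icc a b) (γ '' Set.Icc t₁ t₂) ≤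
          ENNReal.ofReal M := by
  classical
  intro K L hK hL
  have hK0 : (0:ℝ) < K := lt_of_lt_of_le one_pos hK
  -- N K L is nonnegative
  have hN0 : 0 ≤ N K L := by
    have hseg : IsQGSegOn K L 0 0 (fun _ => γ 0) := by
      intro s hs t ht
      have hs0 : s = 0 := le_antisymm hs.2 hs.1
      have ht0 : t = 0 := le_antisymm ht.2 ht.1
      subst hs0; subst ht0
      constructor
      · simp only [sub_self, abs_zero, mul_zero, dist_self, zero_sub]
        linarith
      · simp only [sub_self, abs_zero, mul_zero, dist_self, zero_add]
        linarith
    obtain ⟨t, ht⟩ := hN K L hK hL 0 0 le_rfl _ hseg ⟨0, rfl⟩ ⟨0, rfl⟩ 0 ⟨le_rfl, le_rfl⟩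
    exact le_trans dist_nonneg ht
  have hLγ : 0 ≤ Lγ := by
    have := (hγ 0 0).2
    simp only [sub_self, abs_zero, mul_zero, dist_self, zero_add] at this
    exact this
  set N₀ := N K L with hN₀def
  rcases le_or_gt Kγ 0 with hKγ | hKγ
  · -- degenerate case: γ has bounded image
    refine ⟨N₀ + Lγ, ?_⟩
    intro a b t₁ t₂ σ hab h12 hσ hσa hσb
    have hm := hN K L hK hL a b hab σ hσ ⟨t₁, hσa⟩ ⟨t₂, hσb⟩
    have hγbdd : ∀ u v : ℝ, dist (γ u) (γ v) ≤ Lγ := by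
      intro u v
      have := (hγ u v).2
      nlinarith [abs_nonneg (u - v), mul_nonneg (neg_nonneg.2 hKγ) (abs_nonneg (u - v))]
    apply hausdorff_helper _ _ _ (by linarith)
    · intro x hx
      obtain ⟨s, hs, rfl⟩ := hx
      obtain ⟨t, ht⟩ := hm s hs
      refine ⟨γ t₁, ⟨t₁, ⟨le_rfl, h12.le⟩, rfl⟩, ?_⟩
      calc dist (σ s) (γ t₁) ≤ dist (σ s) (γ t) + dist (γ t) (γ t₁) := dist_triangle _ _ _
        _ ≤ N₀ + Lγ := add_le_add ht (hγbdd _ _)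
    · intro y hy
      obtain ⟨u, hu, rfl⟩ := hy
      refine ⟨σ a, ⟨a, ⟨le_rfl, hab⟩, rfl⟩, ?_⟩
      rw [hσa]
      calc dist (γ u) (γ t₁) ≤ Lγ := hγbdd _ _
        _ ≤ N₀ + Lγ := by linarith
  · -- main case : Kγ > 0
    set A := K * Kγ with hAdef
    set B := max K Kγ * (L + 2*N₀ + Lγ) with hBdef
    have hA : 0 ≤ A := by positivity
    have hLN : 0 ≤ L + 2*N₀ + Lγ := by linarith
    have hB : 0 ≤ B := mul_nonneg (le_trans hK0.le (le_max_left _ _)) hLN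
    set C := 2*(A*(2*A*(A+B)+B) + A + 2*B) with hCdef
    have hABnn : 0 ≤ A + B := by linarith
    have hprod : 0 ≤ A*(2*A*(A+B)+B) := mul_nonneg hA (by nlinarith)
    have hC : 0 ≤ C := by rw [hCdef]; nlinarith
    have hABC : A + B ≤ C := by rw [hCdef]; nlinarith
    refine ⟨N₀ + Kγ*C + Lγ + Kγ*Kγ*Lγ, ?_⟩
    intro a b t₁ t₂ σ hab h12 hσ hσa hσb
    have hKγC : 0 ≤ Kγ*C := mul_nonneg hKγ.le hC
    have hKKL : 0 ≤ Kγ*Kγ*Lγ := mul_nonneg (mul_nonneg hKγ.le hKγ.le) hLγ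
    have hM : 0 ≤ N₀ + Kγ*C + Lγ + Kγ*Kγ*Lγ := by linarith
    have hm := hN K L hK hL a b hab σ hσ ⟨t₁, hσa⟩ ⟨t₂, hσb⟩
    rcases eq_or_lt_of_le hab with rfl | hlt
    · -- a = b : σ is a single point and γ t₁ = γ t₂
      have hd0 : dist (γ t₁) (γ t₂) = 0 := by rw [← hσa, ← hσb]; exact dist_self _
      have hlow := (hγ t₁ t₂).1
      rw [abs_sub_comm, abs_of_nonneg (by linarith : (0:ℝ) ≤ t₂ - t₁), hd0] at hlow
      -- hlow : 1/Kγ * (t₂ - t₁) - Lγ ≤ 0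
      have hinv : Kγ * (1/Kγ) = 1 := mul_one_div_cancel hKγ.ne'
      have h21 : t₂ - t₁ ≤ Kγ * Lγ := by nlinarith [mul_le_mul_of_nonneg_left hlow hKγ.le]
      refine hausdorff_helper _ _ _ hM ?_ ?_
      · intro x hx
        obtain ⟨s, hs, rfl⟩ := hx
        have hsa : s = a := le_antisymm hs.2 hs.1
        subst hsa
        refine ⟨γ t₁, ⟨t₁, ⟨le_rfl, h12.le⟩, rfl⟩, ?_⟩
        rw [hσa, dist_self]; exact hM
      · intro y hy
        obtain ⟨u, hu, rfl⟩ := hy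
        refine ⟨σ a, ⟨a, ⟨le_rfl, le_rfl⟩, rfl⟩, ?_⟩
        rw [hσa]
        have hup2 := (hγ u t₁).2
        rw [abs_of_nonneg (by linarith [hu.1] : (0:ℝ) ≤ u - t₁)] at hup2
        nlinarith [mul_le_mul_of_nonneg_left (show u - t₁ ≤ t₂ - t₁ by linarith [hu.2]) hKγ.le,
          mul_le_mul_of_nonneg_left h21 hKγ.le]
    · -- a < b : the real argument
      obtain ⟨τ, hτa, hτb, hτ⟩ : ∃ τ : ℝ → ℝ, τ a = t₁ ∧ τ b = t₂ ∧
          ∀ s ∈ Set.Icc a b, dist (σ s) (γ (τ s)) ≤ N₀ := by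
        refine ⟨fun s => if s = a then t₁ else if s = b then t₂ else
          if h : s ∈ Set.Icc a b then (hm s h).choose else 0,
          by beta_reduce; rw [if_pos rfl],
          by beta_reduce; rw [if_neg hlt.ne', if_pos rfl], ?_⟩
        intro s hs
        beta_reduce
        by_cases h1 : s = a
        · rw [if_pos h1, h1, hσa, dist_self]; exact hN0
        by_cases h2 : s = b
        · rw [if_neg h1, if_pos h2, h2, hσb, dist_self]; exact hN0
        · rw [if_neg h1, if_neg h2, dif_pos hs]
          exact (hm s hs).choose_spec
      have hinv : Kγ * (1/Kγ) = 1 := mul_one_div_cancel hKγ.ne'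
      have hinvK : K * (1/K) = 1 := mul_one_div_cancel hK0.ne'
      have hup : ∀ s ∈ Set.Icc a b, ∀ s' ∈ Set.Icc a b, |τ s - τ s'| ≤ A * |s - s'| + B := by
        intro s hs s' hs'
        have h1 := hτ s hs
        have h2 := hτ s' hs'
        have h3 := (hσ s hs s' hs').2
        have h4 := (hγ (τ s) (τ s')).1
        have htri : dist (γ (τ s)) (γ (τ s')) ≤
            dist (γ (τ s)) (σ s) + dist (σ s) (σ s') + dist (σ s') (γ (τ s')) :=
          dist_triangle4 _ _ _ _
        rw [dist_comm (γ (τ s)) (σ s)] at htri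
        have key : 1/Kγ * |τ s - τ s'| ≤ K * |s - s'| + (L + 2*N₀ + Lγ) := by linarith
        have key2 := mul_le_mul_of_nonneg_left key hKγ.le
        rw [show Kγ * (1/Kγ * |τ s - τ s'|) = Kγ * (1/Kγ) * |τ s - τ s'| from by ring,
          hinv, one_mul,
          show Kγ * (K * |s - s'| + (L + 2*N₀ + Lγ))
            = K * Kγ * |s - s'| + Kγ * (L + 2*N₀ + Lγ) from by ring] at key2
        have hmax : Kγ * (L + 2*N₀ + Lγ) ≤ B := by
          rw [hBdef]
          exact mul_le_mul_of_nonneg_right (le_max_right K Kγ) hLN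
        rw [hAdef]
        linarith [key2, hmax]
      have hlo : ∀ s ∈ Set.Icc a b, ∀ s' ∈ Set.Icc a b, |s - s'| ≤ A * |τ s - τ s'| + B := by
        intro s hs s' hs'
        have h1 := hτ s hs
        have h2 := hτ s' hs'
        have h3 := (hσ s hs s' hs').1
        have h4 := (hγ (τ s) (τ s')).2
        have htri : dist (σ s) (σ s') ≤
            dist (σ s) (γ (τ s)) + dist (γ (τ s)) (γ (τ s')) + dist (γ (τ s')) (σ s') :=
          dist_triangle4 _ _ _ _
        rw [dist_comm (γ (τ s')) (σ s')] at htri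
        have key : 1/K * |s - s'| ≤ Kγ * |τ s - τ s'| + (L + 2*N₀ + Lγ) := by linarith
        have key2 := mul_le_mul_of_nonneg_left key hK0.le
        rw [show K * (1/K * |s - s'|) = K * (1/K) * |s - s'| from by ring,
          hinvK, one_mul,
          show K * (Kγ * |τ s - τ s'| + (L + 2*N₀ + Lγ))
            = K * Kγ * |τ s - τ s'| + K * (L + 2*N₀ + Lγ) from by ring] at key2
        have hmax : K * (L + 2*N₀ + Lγ) ≤ B := by
          rw [hBdef]
          exact mul_le_mul_of_nonneg_right (le_max_left K Kγ) hLN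
        rw [hAdef]
        linarith [key2, hmax]
      have hlow1d := one_d_lower A B a b t₁ t₂ hA hB τ hab hup hlo hτa hτb h12.le
      have hupp1d := one_d_upper A B a b t₁ t₂ hA hB τ hab hup hlo hτa hτb h12.le
      refine hausdorff_helper _ _ _ hM ?_ ?_
      · intro x hx
        obtain ⟨s, hs, rfl⟩ := hx
        have hdiff : ∃ u ∈ Set.Icc t₁ t₂, |τ s - u| ≤ C := by
          rcases le_or_gt t₁ (τ s) with h1' | h1'
          · rcases le_or_gt (τ s) t₂ with h2' | h2'
            · exact ⟨τ s, ⟨h1', h2'⟩, by simp [hC]⟩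
            · refine ⟨t₂, ⟨h12.le, le_rfl⟩, ?_⟩
              rw [abs_of_nonneg (by linarith : (0:ℝ) ≤ τ s - t₂)]
              have := hupp1d s hs
              rw [← hCdef] at this
              linarith
          · refine ⟨t₁, ⟨le_rfl, h12.le⟩, ?_⟩
            rw [abs_of_nonpos (by linarith : τ s - t₁ ≤ 0)]
            have := hlow1d s hs
            rw [← hCdef] at this
            linarith
        obtain ⟨u, humem, hud⟩ := hdiff
        refine ⟨γ u, ⟨u, humem, rfl⟩, ?_⟩
        have h1 := hτ s hs
        have hg := (hγ (τ s) u).2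
        have htri := dist_triangle (σ s) (γ (τ s)) (γ u)
        linarith [mul_le_mul_of_nonneg_left hud hKγ.le, hKKL]
      · intro y hy
        obtain ⟨u, hu, rfl⟩ := hy
        obtain ⟨s, hsmem, hsd⟩ := coarse_ivt A B a b u hA τ hab hup
          (by rw [hτa]; exact hu.1) (by rw [hτb]; exact hu.2)
        refine ⟨σ s, ⟨s, hsmem, rfl⟩, ?_⟩
        have h1 := hτ s hsmem
        have hg := (hγ u (τ s)).2
        rw [abs_sub_comm] at hg
        have htri := dist_triangle (γ u) (γ (τ s)) (σ s)
        rw [dist_comm (γ (τ s)) (σ s)] at htri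
        have hABC' : |τ s - u| ≤ C := le_trans hsd hABC
        linarith [mul_le_mul_of_nonneg_left hABC' hKγ.le, hKKL]
end
end

section
/- For any bi-infinite geodesic α in a geodesic space, the lower divergence of α satisfies ldiv_α(r) ≤ Div_α(r) for all r > 0; moreover, if α is periodic (i.e., gα = α for some isometry g of the space acting as a nontrivial translation along α), then ldiv_α and Div_α are equivalent under ∼. -/
open Set Metric

noncomputable section

open scoped ENNReal NNReal
/-- Lengths of paths from `γ(t−r)` to `γ(t+r)` avoiding the open ball of radius `r`
about `γ t`. -/
def PathsOutside {X : Type*} [MetricSpace X] (γ : ℝ → X) (r t : ℝ) : Set ℝ≥0∞ :=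
  {ℓ | ∃ p : ℝ → X, ContinuousOn p (Set.Icc 0 1) ∧ p 0 = γ (t - r) ∧ p 1 = γ (t + r) ∧
    (∀ s ∈ Set.Icc (0 : ℝ) 1, r ≤ dist (p s) (γ t)) ∧ ℓ = eVariationOn p (Set.Icc 0 1)}

/-- `ρ_γ(r,t)`: infimal length of a path from `γ(t−r)` to `γ(t+r)` avoiding the open
`r`-ball about `γ t` (`∞` if there is none). -/
def rhoDiv {X : Type*} [MetricSpace X] (γ : ℝ → X) (r t : ℝ) : ℝ≥0∞ :=
  sInf (PathsOutside γ r t)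

/-- The lower divergence `ldiv_γ(r) = inf_{t ∈ ℝ} ρ_γ(r,t)`. -/
def ldiv {X : Type*} [MetricSpace X] (γ : ℝ → X) (r : ℝ) : ℝ≥0∞ :=
  ⨅ t : ℝ, rhoDiv γ r t

/-- Domination for `[0,∞]`-valued functions: `f x ≤ A·g(Bx) + C·x` for `x > D`. -/
def DominatesE (f g : ℝ → ℝ≥0∞) : Prop :=
  ∃ A B C D : ℝ, 0 < A ∧ 0 < B ∧ 0 < C ∧ 0 < D ∧
    ∀ x : ℝ, D < x → f x ≤ ENNReal.ofReal A * g (B * x) + ENNReal.ofReal (C * x)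

/-- Equivalence of functions: mutual domination. -/
def EquivE (f g : ℝ → ℝ≥0∞) : Prop := DominatesE f g ∧ DominatesE g f


section Aux

variable {X : Type*} [MetricSpace X]

/-- Continuity on a union of two closed sets. -/
lemma continuousOn_union_of_isClosed {Y : Type*} [TopologicalSpace Y] {f : X → Y}
    {s t : Set X} (hs : IsClosed s) (ht : IsClosed t)
    (hfs : ContinuousOn f s) (hft : ContinuousOn f t) : ContinuousOn f (s ∪ t) := by
  intro x hx
  have Hs : ContinuousWithinAt f s x := by
    by_cases h : x ∈ s
    · exact hfs x h
    · exact continuousWithinAt_of_notMem_closure (by rwa [hs.closure_eq])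
  have Ht : ContinuousWithinAt f t x := by
    by_cases h : x ∈ t
    · exact hft x h
    · exact continuousWithinAt_of_notMem_closure (by rwa [ht.closure_eq])
  exact Hs.union Ht

lemma evar_comp_isometryEquiv (g : X ≃ᵢ X) (p : ℝ → X) (s : Set ℝ) :
    eVariationOn (fun u => g (p u)) s = eVariationOn p s := by
  simp only [eVariationOn, g.edist_eq]

lemma pathsOutside_subset_shift {α : ℝ → X} (g : X ≃ᵢ X) {c : ℝ}
    (hg : ∀ u, g (α u) = α (u + c)) (r t : ℝ) :
    PathsOutside α r t ⊆ PathsOutside α r (t + c) := by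
  rintro ℓ ⟨p, hp, h0, h1, hav, rfl⟩
  refine ⟨fun u => g (p u), g.continuous.comp_continuousOn hp, ?_, ?_, ?_,
    (evar_comp_isometryEquiv g p _).symm⟩
  · show g (p 0) = α (t + c - r)
    rw [h0, hg]; congr 1; ring
  · show g (p 1) = α (t + c + r)
    rw [h1, hg]; congr 1; ring
  · intro s hs
    rw [← hg t, g.dist_eq]
    exact hav s hs

lemma symm_translate {α : ℝ → X} (g : X ≃ᵢ X) {c : ℝ}
    (hg : ∀ u, g (α u) = α (u + c)) : ∀ u, g.symm (α u) = α (u + -c) := by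
  intro u
  have h : g (α (u + -c)) = α u := by rw [hg]; congr 1; ring
  rw [← h, g.symm_apply_apply]

lemma rhoDiv_add_period {α : ℝ → X} (g : X ≃ᵢ X) {c : ℝ}
    (hg : ∀ u, g (α u) = α (u + c)) (r t : ℝ) :
    rhoDiv α r (t + c) = rhoDiv α r t := by
  refine le_antisymm (sInf_le_sInf (pathsOutside_subset_shift g hg r t)) ?_
  have h2 := pathsOutside_subset_shift g.symm (symm_translate g hg) r (t + c)
  have e : t + c + -c = t := by ring
  rw [e] at h2
  exact sInf_le_sInf h2

lemma rhoDiv_add_nat_period {α : ℝ → X} (g : X ≃ᵢ X) {c : ℝ}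
    (hg : ∀ u, g (α u) = α (u + c)) (r : ℝ) :
    ∀ (n : ℕ) (t : ℝ), rhoDiv α r (t + n * c) = rhoDiv α r t := by
  intro n
  induction n with
  | zero => intro t; norm_num
  | succ k ih =>
      intro t
      have e : (t + ((k : ℕ) + 1 : ℕ) * c : ℝ) = (t + (k : ℝ) * c) + c := by push_cast; ring
      rw [e, rhoDiv_add_period g hg r, show (t + (k : ℝ) * c) = (t + ((k : ℕ) : ℝ) * c) from by
        push_cast; ring, ih]

lemma exists_rep {c' : ℝ} (hc' : 0 < c') (t : ℝ) :
    ∃ t₀ : ℝ, 0 ≤ t₀ ∧ t₀ < c' ∧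
      ((∃ m : ℕ, t = t₀ + m * c') ∨ (∃ m : ℕ, t₀ = t + m * c')) := by
  refine ⟨Int.fract (t / c') * c', mul_nonneg (Int.fract_nonneg _) hc'.le, ?_, ?_⟩
  · calc Int.fract (t / c') * c' < 1 * c' :=
        mul_lt_mul_of_pos_right (Int.fract_lt_one _) hc'
      _ = c' := one_mul _
  · have hf : Int.fract (t / c') = t / c' - (⌊t / c'⌋ : ℝ) := rfl
    have hteq : t = Int.fract (t / c') * c' + (⌊t / c'⌋ : ℝ) * c' := by
      rw [hf]; field_simp; ring
    rcases le_or_gt 0 (⌊t / c'⌋ : ℤ) with hn | hn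
    · obtain ⟨m, hm⟩ := Int.eq_ofNat_of_zero_le hn
      refine Or.inl ⟨m, ?_⟩
      have hmr : ((⌊t / c'⌋ : ℤ) : ℝ) = (m : ℝ) := by rw [hm]; push_cast; ring
      rw [hmr] at hteq
      linarith
    · obtain ⟨m, hm⟩ := Int.eq_ofNat_of_zero_le (by omega : (0 : ℤ) ≤ -⌊t / c'⌋)
      refine Or.inr ⟨m, ?_⟩
      have hmr : ((⌊t / c'⌋ : ℤ) : ℝ) = -(m : ℝ) := by
        have := congrArg (fun z : ℤ => (z : ℝ)) hm
        push_cast at this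
        linarith
      rw [hmr] at hteq
      linarith

/-- Key geometric lemma: the divergence at `0` with radius `r` is bounded by the divergence
at nearby `t` with radius `3r`, plus `4r` for connecting arcs along the geodesic. -/
lemma rhoDiv_zero_le {α : ℝ → X} (hα : IsGeodesicLine α) {r t : ℝ}
    (hr : 0 < r) (ht0 : 0 ≤ t) (htr : t ≤ r) :
    rhoDiv α r 0 ≤ rhoDiv α (3 * r) t + ENNReal.ofReal (4 * r) := by
  have hiso : Isometry α := Isometry.of_dist_eq fun s u => by rw [hα, Real.dist_eq]
  rw [show rhoDiv α (3 * r) t = sInf (PathsOutside α (3 * r) t) from rfl, ENNReal.sInf_add]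
  refine le_iInf₂ fun ℓ hℓ => ?_
  obtain ⟨p, hp, h0, h1, hav, rfl⟩ := hℓ
  set A1 : ℝ → X := fun s => α (-r + 4 * s * (t - 2 * r)) with hA1
  set A2 : ℝ → X := fun s => p (2 * s - 1 / 2) with hA2
  set A3 : ℝ → X := fun s => α (r + (4 - 4 * s) * (t + 2 * r)) with hA3
  set q : ℝ → X := fun s => if s ≤ 1 / 4 then A1 s else if s ≤ 3 / 4 then A2 s else A3 s with hq
  have e1 : EqOn q A1 (Icc 0 (1 / 4)) := fun s hs => if_pos hs.2
  have e2 : EqOn q A2 (Icc (1 / 4) (3 / 4)) := by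
    intro s hs
    by_cases h : s ≤ 1 / 4
    · have hs14 : s = 1 / 4 := le_antisymm h hs.1
      subst hs14
      show (if (1/4 : ℝ) ≤ 1 / 4 then A1 (1/4) else if (1/4 : ℝ) ≤ 3 / 4 then A2 (1/4) else A3 (1/4)) = A2 (1 / 4)
      rw [if_pos le_rfl, hA1, hA2]
      simp only
      rw [show (2 * (1 / 4 : ℝ) - 1 / 2) = 0 by norm_num, h0]
      congr 1; ring
    · show (if s ≤ 1 / 4 then A1 s else if s ≤ 3 / 4 then A2 s else A3 s) = A2 s
      rw [if_neg h, if_pos hs.2]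
  have e3 : EqOn q A3 (Icc (3 / 4) 1) := by
    intro s hs
    have h14 : ¬ s ≤ 1 / 4 := by
      have := hs.1; intro h; linarith
    by_cases h : s ≤ 3 / 4
    · have hs34 : s = 3 / 4 := le_antisymm h hs.1
      subst hs34
      show (if (3/4 : ℝ) ≤ 1 / 4 then A1 (3/4) else if (3/4:ℝ) ≤ 3 / 4 then A2 (3/4) else A3 (3/4)) = A3 (3 / 4)
      rw [if_neg h14, if_pos le_rfl, hA2, hA3]
      simp only
      rw [show (2 * (3 / 4 : ℝ) - 1 / 2) = 1 by norm_num, h1]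
      congr 1; ring
    · show (if s ≤ 1 / 4 then A1 s else if s ≤ 3 / 4 then A2 s else A3 s) = A3 s
      rw [if_neg h14, if_neg h]
  -- continuity
  have hA1c : ContinuousOn A1 (Icc 0 (1 / 4)) :=
    (hiso.continuous.comp (by fun_prop)).continuousOn
  have hmap2 : MapsTo (fun s : ℝ => 2 * s - 1 / 2) (Icc (1 / 4) (3 / 4)) (Icc 0 1) := by
    intro s hs
    exact ⟨by linarith [hs.1], by linarith [hs.2]⟩
  have hA2c : ContinuousOn A2 (Icc (1 / 4) (3 / 4)) :=
    hp.comp (by fun_prop) hmap2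
  have hA3c : ContinuousOn A3 (Icc (3 / 4) 1) :=
    (hiso.continuous.comp (by fun_prop)).continuousOn
  have hqc : ContinuousOn q (Icc 0 1) := by
    have h12 : ContinuousOn q (Icc 0 (1 / 4) ∪ Icc (1 / 4) (3 / 4)) :=
      continuousOn_union_of_isClosed isClosed_Icc isClosed_Icc
        (hA1c.congr e1) (hA2c.congr e2)
    have h123 : ContinuousOn q ((Icc 0 (1 / 4) ∪ Icc (1 / 4) (3 / 4)) ∪ Icc (3 / 4) 1) :=
      continuousOn_union_of_isClosed (isClosed_Icc.union isClosed_Icc) isClosed_Icc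
        h12 (hA3c.congr e3)
    refine h123.mono ?_
    intro s hs
    by_cases h1' : s ≤ 1 / 4
    · exact Or.inl (Or.inl ⟨hs.1, h1'⟩)
    by_cases h2' : s ≤ 3 / 4
    · exact Or.inl (Or.inr ⟨le_of_not_ge h1', h2'⟩)
    · exact Or.inr ⟨le_of_not_ge h2', hs.2⟩
  -- membership in PathsOutside α r 0
  have hq0 : q 0 = α (0 - r) := by
    have : q 0 = A1 0 := e1 ⟨le_rfl, by norm_num⟩
    rw [this, hA1]; simp only; congr 1; ring
  have hq1 : q 1 = α (0 + r) := by
    have : q 1 = A3 1 := e3 ⟨by norm_num, le_rfl⟩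
    rw [this, hA3]; simp only; congr 1; ring
  have hqav : ∀ s ∈ Icc (0 : ℝ) 1, r ≤ dist (q s) (α 0) := by
    intro s hs
    by_cases h1' : s ≤ 1 / 4
    · rw [e1 ⟨hs.1, h1'⟩, hA1]
      simp only
      rw [hα]
      have hmul : 4 * s * (t - 2 * r) ≤ 0 := by
        apply mul_nonpos_of_nonneg_of_nonpos
        · linarith [hs.1]
        · linarith
      rw [abs_of_nonpos (by linarith)]
      linarith
    by_cases h2' : s ≤ 3 / 4
    · rw [e2 ⟨le_of_not_ge h1', h2'⟩, hA2]
      simp only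
      have hmem : (2 * s - 1 / 2) ∈ Icc (0 : ℝ) 1 := by
        constructor <;> [linarith [le_of_not_ge h1']; linarith]
      have h3 := hav _ hmem
      have htd : dist (α t) (α 0) = t := by
        rw [hα, abs_of_nonneg (by linarith)]; ring
      have htri := dist_triangle (p (2 * s - 1 / 2)) (α t) (α 0)
      have : dist (p (2 * s - 1 / 2)) (α t) ≤ dist (p (2 * s - 1 / 2)) (α 0) + dist (α 0) (α t) :=
        dist_triangle _ _ _
      rw [dist_comm (α 0) (α t)] at this
      linarith
    · rw [e3 ⟨le_of_not_ge h2', hs.2⟩, hA3]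
      simp only
      rw [hα]
      have hmul : 0 ≤ (4 - 4 * s) * (t + 2 * r) := by
        apply mul_nonneg
        · linarith [hs.2]
        · linarith
      rw [abs_of_nonneg (by linarith)]
      linarith
  have hmem : eVariationOn q (Icc 0 1) ∈ PathsOutside α r 0 :=
    ⟨q, hqc, hq0, hq1, hqav, rfl⟩
  refine (sInf_le hmem).trans ?_
  -- now bound eVariationOn q (Icc 0 1)
  have hsplit1 := eVariationOn.Icc_add_Icc q (a := 0) (b := 1/4) (c := 1)
    (by norm_num) (by norm_num) (s := Icc 0 1) (by norm_num)
  have hsplit2 := eVariationOn.Icc_add_Icc q (a := 1/4) (b := 3/4) (c := 1)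
    (by norm_num) (by norm_num) (s := Icc 0 1) (by norm_num)
  have i1 : Icc (0:ℝ) 1 ∩ Icc 0 (1/4) = Icc 0 (1/4) :=
    inter_eq_self_of_subset_right (Icc_subset_Icc le_rfl (by norm_num))
  have i2 : Icc (0:ℝ) 1 ∩ Icc (1/4) (3/4) = Icc (1/4) (3/4) :=
    inter_eq_self_of_subset_right (Icc_subset_Icc (by norm_num) (by norm_num))
  have i3 : Icc (0:ℝ) 1 ∩ Icc (3/4) 1 = Icc (3/4) 1 :=
    inter_eq_self_of_subset_right (Icc_subset_Icc (by norm_num) le_rfl)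
  have i4 : Icc (0:ℝ) 1 ∩ Icc 0 1 = Icc 0 1 := inter_self _
  have i5 : Icc (0:ℝ) 1 ∩ Icc (1/4) 1 = Icc (1/4) 1 :=
    inter_eq_self_of_subset_right (Icc_subset_Icc (by norm_num) le_rfl)
  rw [i1, i5, i4] at hsplit1
  rw [i2, i3, i5] at hsplit2
  have htotal : eVariationOn q (Icc 0 1) =
      eVariationOn q (Icc 0 (1/4)) + (eVariationOn q (Icc (1/4) (3/4)) +
        eVariationOn q (Icc (3/4) 1)) := by
    rw [hsplit2, hsplit1]
  -- E2 = ℓ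
  have hE2 : eVariationOn q (Icc (1/4) (3/4)) = eVariationOn p (Icc 0 1) := by
    rw [eVariationOn.eq_of_eqOn e2]
    have : A2 = p ∘ (fun s : ℝ => 2 * s - 1 / 2) := rfl
    rw [this, eVariationOn.comp_eq_of_monotoneOn p _
      (fun x _ y _ hxy => by show 2*x - 1/2 ≤ 2*y - 1/2; linarith)]
    congr 1
    ext x
    simp only [mem_image, mem_Icc]
    constructor
    · rintro ⟨y, hy, rfl⟩
      exact ⟨by linarith [hy.1], by linarith [hy.2]⟩
    · intro hx
      exact ⟨(x + 1/2) / 2, ⟨by linarith [hx.1], by linarith [hx.2]⟩, by ring⟩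
  -- E1 bound
  have hidvar : ∀ a b : ℝ, a ≤ b → eVariationOn (id : ℝ → ℝ) (Icc a b) ≤ ENNReal.ofReal (b - a) := by
    intro a b hab
    have := MonotoneOn.eVariationOn_le (f := (id : ℝ → ℝ)) (s := Icc a b)
      (monotoneOn_id) (left_mem_Icc.2 hab) (right_mem_Icc.2 hab)
    rwa [inter_self] at this
  have segbound : ∀ (f : ℝ → X) (K : ℝ) (a b : ℝ), a ≤ b → 0 ≤ K →
      (∀ x ∈ Icc a b, ∀ y ∈ Icc a b, dist (f x) (f y) ≤ K * dist x y) →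
      eVariationOn f (Icc a b) ≤ ENNReal.ofReal (K * (b - a)) := by
    intro f K a b hab hK hlip
    have hL : LipschitzOnWith (Real.toNNReal K) f (Icc a b) := by
      apply LipschitzOnWith.of_dist_le_mul
      intro x hx y hy
      rw [Real.coe_toNNReal K hK]
      exact hlip x hx y hy
    have h1 : eVariationOn (f ∘ (id : ℝ → ℝ)) (Icc a b) ≤
        (Real.toNNReal K : ℝ≥0∞) * eVariationOn (id : ℝ → ℝ) (Icc a b) :=
      hL.comp_eVariationOn_le (mapsTo_id _)
    have h2 : eVariationOn f (Icc a b) = eVariationOn (f ∘ (id : ℝ → ℝ)) (Icc a b) := rfl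
    rw [h2]
    refine h1.trans ?_
    calc (Real.toNNReal K : ℝ≥0∞) * eVariationOn (id : ℝ → ℝ) (Icc a b)
        ≤ ENNReal.ofReal K * ENNReal.ofReal (b - a) := by
          rw [ENNReal.ofReal]
          exact mul_le_mul_right (hidvar a b hab) _
      _ = ENNReal.ofReal (K * (b - a)) := (ENNReal.ofReal_mul hK).symm
  have hE1 : eVariationOn q (Icc 0 (1/4)) ≤ ENNReal.ofReal (2 * r - t) := by
    rw [eVariationOn.eq_of_eqOn e1]
    have := segbound A1 (4 * (2 * r - t)) 0 (1/4) (by norm_num) (by linarith) ?_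
    · refine this.trans ?_
      apply le_of_eq
      congr 1
      ring
    · intro x _ y _
      rw [hA1]
      simp only
      rw [hα, Real.dist_eq]
      have : (-r + 4 * x * (t - 2 * r)) - (-r + 4 * y * (t - 2 * r)) =
          -(4 * (2 * r - t)) * (x - y) := by ring
      rw [this, abs_mul, abs_neg, abs_of_nonneg (by linarith : (0:ℝ) ≤ 4 * (2 * r - t))]
  have hE3 : eVariationOn q (Icc (3/4) 1) ≤ ENNReal.ofReal (2 * r + t) := by
    rw [eVariationOn.eq_of_eqOn e3]
    have := segbound A3 (4 * (t + 2 * r)) (3/4) 1 (by norm_num) (by linarith) ?_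
    · refine this.trans ?_
      apply le_of_eq
      congr 1
      ring
    · intro x _ y _
      rw [hA3]
      simp only
      rw [hα, Real.dist_eq]
      have : (r + (4 - 4 * x) * (t + 2 * r)) - (r + (4 - 4 * y) * (t + 2 * r)) =
          -(4 * (t + 2 * r)) * (x - y) := by ring
      rw [this, abs_mul, abs_neg, abs_of_nonneg (by linarith : (0:ℝ) ≤ 4 * (t + 2 * r))]
  rw [htotal, hE2]
  calc eVariationOn q (Icc 0 (1/4)) + (eVariationOn p (Icc 0 1) + eVariationOn q (Icc (3/4) 1))
      ≤ ENNReal.ofReal (2 * r - t) + (eVariationOn p (Icc 0 1) + ENNReal.ofReal (2 * r + t)) :=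
        add_le_add hE1 (add_le_add le_rfl hE3)
    _ = eVariationOn p (Icc 0 1) + ENNReal.ofReal (4 * r) := by
        rw [← add_assoc, add_comm (ENNReal.ofReal (2 * r - t)) (eVariationOn p (Icc 0 1)),
          add_assoc, ← ENNReal.ofReal_add (by linarith) (by linarith)]
        congr 2
        ring

end Aux

/-- For a bi-infinite geodesic `α`: `ldiv_α(r) ≤ Div_α(r) = ρ_α(r,0)` for all `r > 0`, and if
`α` is periodic (invariant under an isometry acting as a nontrivial translation along `α`)
then `ldiv_α ∼ Div_α`. -/
theorem ldiv_le_div_and_periodic {X : Type*} [MetricSpace X] (hX : GeodesicSpace X)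
    (α : ℝ → X) (hα : IsGeodesicLine α) :
    (∀ r : ℝ, 0 < r → ldiv α r ≤ rhoDiv α r 0) ∧
    ((∃ (g : X ≃ᵢ X) (c : ℝ), c ≠ 0 ∧ ∀ t : ℝ, g (α t) = α (t + c)) →
      EquivE (ldiv α) (fun r => rhoDiv α r 0)) := by
  constructor
  · intro r _
    exact iInf_le _ 0
  · rintro ⟨g, c, hc, hg⟩
    constructor
    · -- ldiv ⪯ Div : trivial with A=B=C=D=1
      refine ⟨1, 1, 1, 1, one_pos, one_pos, one_pos, one_pos, fun x hx => ?_⟩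
      have h1 : ldiv α x ≤ rhoDiv α x 0 := iInf_le _ 0
      calc ldiv α x ≤ rhoDiv α x 0 := h1
        _ ≤ ENNReal.ofReal 1 * rhoDiv α (1 * x) 0 + ENNReal.ofReal (1 * x) := by
            rw [ENNReal.ofReal_one, one_mul, one_mul]
            exact le_self_add
    · -- Div ⪯ ldiv with A=1, B=3, C=4, D=|c|
      -- first get a positive period
      obtain ⟨h, c', hc', hh⟩ : ∃ (h : X ≃ᵢ X) (c' : ℝ), 0 < c' ∧ ∀ u, h (α u) = α (u + c') := by
        rcases hc.lt_or_gt with hneg | hpos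
        · exact ⟨g.symm, -c, by linarith, symm_translate g hg⟩
        · exact ⟨g, c, hpos, hg⟩
      refine ⟨1, 3, 4, c', one_pos, by norm_num, by norm_num, hc', fun x hx => ?_⟩
      have hx0 : 0 < x := hc'.trans hx
      rw [ENNReal.ofReal_one, one_mul]
      have key : ∀ t : ℝ, rhoDiv α x 0 ≤ rhoDiv α (3 * x) t + ENNReal.ofReal (4 * x) := by
        intro t
        obtain ⟨t₀, ht₀0, ht₀lt, hcase⟩ := exists_rep hc' t
        have ht₀x : t₀ ≤ x := le_of_lt (ht₀lt.trans hx)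
        have heq : rhoDiv α (3 * x) t = rhoDiv α (3 * x) t₀ := by
          rcases hcase with ⟨m, hm⟩ | ⟨m, hm⟩
          · rw [hm]
            exact rhoDiv_add_nat_period h hh (3 * x) m t₀
          · rw [hm]
            exact (rhoDiv_add_nat_period h hh (3 * x) m t).symm
        rw [heq]
        exact rhoDiv_zero_le hα hx0 ht₀0 ht₀x
      have : rhoDiv α x 0 ≤ ⨅ t : ℝ, (rhoDiv α (3 * x) t + ENNReal.ofReal (4 * x)) :=
        le_iInf key
      refine this.trans ?_
      rw [show ldiv α (3 * x) = ⨅ t : ℝ, rhoDiv α (3 * x) t from rfl, ENNReal.iInf_add]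
end
end
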